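/- arXiv:1812.02450 — 10 statements merged into one kernel-verified Lean document; each statement's English description precedes it below -/
import Mathlib

section
/- Let X be a real Banach space and x ∈ S_X. Then x is a Δ-point (i.e. x ∈ cl conv Δ_ε(x) for all ε > 0) if and only if for every x* ∈ X* with x*(x) = 1 the rank-one projection P = x* ⊗ x (given by Py = x*(y)·x) satisfies ‖Id − P‖ ≥ 2. -/
/-!
If `x ∈ cl conv Δ_ε(x)` and `f x = 1`, then `f` exceeds `1 - ε` at some `z ∈ Δ_ε(x)`; testing
`z - f z • x` against a functional norming `x - z` shows `‖(Id - P) z‖ ≥ 2 - 3ε`.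

Conversely, if `x ∉ cl conv Δ_ε(x)`, Hahn–Banach separates `x` from `Δ_ε(x)`. Adding a large
multiple of a norming functional of `x` to the separating functional and rescaling gives `f` with
`f x = 1`, `‖f‖ ≤ 1 + ε/2` and `f ≤ 1 - η` on `Δ_ε(x)`. For `‖y‖ ≤ 1` with `f y ≥ 0` (the other
sign follows by `y ↦ -y`), either `y ∈ Δ_ε(x)`, so `‖y - f y • x‖ ≤ 1 + f y ≤ 2 - η`, or
`‖x - y‖ < 2 - ε`, and then `y - f y • x` is within `ε/2` of a convex combination of `y - x` and `y`.
Hence `‖Id - P‖ ≤ 2 - min η (ε/2) < 2`.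
-/

open ContinuousLinearMap

section DeltaPoint

variable {X : Type*} [NormedAddCommGroup X]

/-- The set `Δ_ε(x)`. -/
def deltaSet (x : X) (ε : ℝ) : Set X := {y | ‖y‖ ≤ 1 ∧ 2 - ε ≤ ‖x - y‖}

lemma deltaSet_mono (x : X) {ε ε' : ℝ} (h : ε ≤ ε') : deltaSet x ε ⊆ deltaSet x ε' :=
  fun _ hy => ⟨hy.1, by linarith [hy.2]⟩

variable [NormedSpace ℝ X]

def IsDeltaPoint (x : X) : Prop := ∀ ε > 0, x ∈ closure (convexHull ℝ (deltaSet x ε))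

lemma exists_mem_lt_apply_of_mem_closure_convexHull {E : Type*} [AddCommGroup E] [Module ℝ E]
    [TopologicalSpace E] {s : Set E} {x : E} (hx : x ∈ closure (convexHull ℝ s))
    (f : E →L[ℝ] ℝ) {a : ℝ} (ha : a < f x) : ∃ z ∈ s, a < f z := by
  by_contra! h
  have hsub : closure (convexHull ℝ s) ⊆ {w | f w ≤ a} :=
    closure_minimal (convexHull_min h (convex_halfSpace_le f.isLinear a))
      (isClosed_le f.continuous continuous_const)
  exact (hsub hx).not_gt ha

lemma two_sub_three_mul_le_norm_sub_smul {x z : X} {a ε : ℝ} (hx : ‖x‖ = 1)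
    (hz : z ∈ deltaSet x ε) (ha : 1 - ε ≤ a) : 2 - 3 * ε ≤ ‖z - a • x‖ := by
  rcases lt_or_ge 1 ε with hε | hε
  · linarith [norm_nonneg (z - a • x)]
  obtain ⟨g, hg, hgxz⟩ := exists_dual_vector'' ℝ (x - z)
  have hgx : |g x| ≤ 1 := by simpa [hx] using g.le_of_opNorm_le hg x
  have hgz : |g z| ≤ 1 := (g.le_of_opNorm_le hg z).trans (by simpa using hz.1)
  have hgap : 2 - ε ≤ g x - g z := by
    rw [← map_sub, hgxz]; exact hz.2
  have hgx' : 1 - ε ≤ g x := by linarith [abs_le.1 hgz]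
  have hgz' : g z ≤ ε - 1 := by linarith [abs_le.1 hgx]
  have hnorm : g (a • x - z) ≤ ‖z - a • x‖ := by
    rw [norm_sub_rev]
    exact (le_abs_self _).trans ((g.le_of_opNorm_le hg _).trans_eq (one_mul _))
  have hval : g (a • x - z) = a * g x - g z := by simp
  nlinarith [mul_le_mul ha hgx' (by linarith) (by linarith), sq_nonneg ε]

lemma two_le_norm_id_sub_smulRight {x : X} (hx : ‖x‖ = 1) (hΔ : IsDeltaPoint x)
    (f : X →L[ℝ] ℝ) (hfx : f x = 1) : 2 ≤ ‖ContinuousLinearMap.id ℝ X - f.smulRight x‖ := by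
  refine le_of_forall_pos_le_add fun δ hδ => ?_
  obtain ⟨z, hz, hfz⟩ := exists_mem_lt_apply_of_mem_closure_convexHull
    (hΔ (δ / 3) (by positivity)) f (show 1 - δ / 3 < f x by linarith)
  have hlow := two_sub_three_mul_le_norm_sub_smul hx hz hfz.le
  have hup : ‖z - f z • x‖ ≤ ‖ContinuousLinearMap.id ℝ X - f.smulRight x‖ := by
    simpa using (ContinuousLinearMap.id ℝ X - f.smulRight x).unit_le_opNorm z hz.1
  linarith

lemma exists_pos_add_le_one_add_mul {a b δ : ℝ} (hab : a ≤ b) (hδ : 0 < δ) :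
    ∃ c > 0, 0 < a + c ∧ b + c ≤ (1 + δ) * (a + c) := by
  have hq : 0 ≤ (b - a) / δ := div_nonneg (by linarith) hδ.le
  have hq' : δ * ((b - a) / δ) = b - a := mul_div_cancel₀ _ hδ.ne'
  refine ⟨|a| + 1 + (b - a) / δ, by positivity, by linarith [neg_abs_le a], ?_⟩
  nlinarith [neg_abs_le a]

/-- The functional is `(g x + c)⁻¹ • (g + c • g₀)` with `g₀` norming `x` and `c` large. -/
lemma exists_apply_eq_one_norm_le_of_le_lt {s : Set X} {x : X} (hx : ‖x‖ = 1)
    (hs : ∀ y ∈ s, ‖y‖ ≤ 1) (g : X →L[ℝ] ℝ) {u : ℝ} (hgs : ∀ y ∈ s, g y ≤ u) (hgx : u < g x)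
    {δ : ℝ} (hδ : 0 < δ) :
    ∃ f : X →L[ℝ] ℝ, ∃ η > 0, f x = 1 ∧ ‖f‖ ≤ 1 + δ ∧ ∀ y ∈ s, f y ≤ 1 - η := by
  obtain ⟨g₀, hg₀, hg₀x⟩ := exists_dual_vector'' ℝ x
  replace hg₀x : g₀ x = 1 := by simpa [hx] using hg₀x
  have hgx_le : g x ≤ ‖g‖ := by simpa [hx] using (le_abs_self _).trans (g.le_opNorm x)
  obtain ⟨c, hc, hxc, hnorm⟩ := exists_pos_add_le_one_add_mul hgx_le hδ
  refine ⟨(g x + c)⁻¹ • (g + c • g₀), (g x - u) / (g x + c), div_pos (by linarith) hxc, ?_, ?_, ?_⟩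
  · simp [hg₀x, ← mul_add, inv_mul_cancel₀ hxc.ne']
  · have hsum : ‖g + c • g₀‖ ≤ ‖g‖ + c := calc
      ‖g + c • g₀‖ ≤ ‖g‖ + ‖c‖ * ‖g₀‖ := (norm_add_le _ _).trans (by rw [norm_smul])
      _ ≤ ‖g‖ + c := by
        rw [Real.norm_of_nonneg hc.le]; nlinarith
    rw [norm_smul, Real.norm_of_nonneg (inv_nonneg.2 hxc.le), inv_mul_le_iff₀ hxc]
    linarith
  · intro y hy
    have hg₀y : g₀ y ≤ 1 :=
      (le_abs_self _).trans ((g₀.le_of_opNorm_le hg₀ y).trans (by nlinarith [hs y hy]))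
    have hη : 1 - (g x - u) / (g x + c) = (u + c) / (g x + c) := by field_simp; ring
    rw [hη, smul_apply, smul_eq_mul, inv_mul_eq_div, div_le_div_iff_of_pos_right hxc]
    simp only [add_apply, smul_apply, smul_eq_mul]
    nlinarith [hgs y hy]

lemma norm_sub_smul_le_two_sub_min {x y : X} {c ε η : ℝ} (hx : ‖x‖ = 1) (hy : ‖y‖ ≤ 1)
    (hε : 0 ≤ ε) (hε1 : ε ≤ 1) (hc : 0 ≤ c) (hc' : c ≤ 1 + ε / 2)
    (hΔ : y ∈ deltaSet x ε → c ≤ 1 - η) : ‖y - c • x‖ ≤ 2 - min η (ε / 2) := by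
  have hmin := min_le_left η (ε / 2)
  have hmin' := min_le_right η (ε / 2)
  have hcx : ‖c • x‖ = c := by rw [norm_smul, hx, Real.norm_of_nonneg hc, mul_one]
  by_cases hyΔ : y ∈ deltaSet x ε
  · linarith [hΔ hyΔ, norm_sub_le y (c • x)]
  have hyx : ‖y - x‖ < 2 - ε := by
    rw [norm_sub_rev]; exact lt_of_not_ge fun h => hyΔ ⟨hy, h⟩
  rcases le_or_gt c 1 with hc1 | hc1
  · have hconv : y - c • x = c • (y - x) + (1 - c) • y := by
      rw [smul_sub, sub_smul, one_smul]; abel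
    have := norm_add_le (c • (y - x)) ((1 - c) • y)
    rw [← hconv, norm_smul, norm_smul, Real.norm_of_nonneg hc,
      Real.norm_of_nonneg (by linarith)] at this
    nlinarith
  · have hsplit : y - c • x = (y - x) - (c - 1) • x := by
      rw [sub_smul, one_smul]; abel
    have := norm_sub_le (y - x) ((c - 1) • x)
    rw [← hsplit, norm_smul, hx, Real.norm_of_nonneg (by linarith)] at this
    linarith

lemma norm_id_sub_smulRight_le {x : X} {f : X →L[ℝ] ℝ} {ε η : ℝ} (hx : ‖x‖ = 1) (hε : 0 ≤ ε)
    (hε1 : ε ≤ 1) (hf : ‖f‖ ≤ 1 + ε / 2) (hfΔ : ∀ y ∈ deltaSet x ε, f y ≤ 1 - η) :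
    ‖ContinuousLinearMap.id ℝ X - f.smulRight x‖ ≤ 2 - min η (ε / 2) := by
  refine opNorm_le_of_unit_norm (by linarith [min_le_right η (ε / 2)]) fun y hy => ?_
  simp only [sub_apply, coe_id', id_eq, smulRight_apply]
  have hfy : |f y| ≤ 1 + ε / 2 := (f.le_of_opNorm_le hf y).trans_eq (by rw [hy, mul_one])
  wlog hfy0 : 0 ≤ f y generalizing y
  · have := this (-y) (by rwa [norm_neg]) (by rwa [map_neg, abs_neg]) (by simp; linarith)
    rwa [map_neg, neg_smul, neg_sub_neg, norm_sub_rev] at this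
  exact norm_sub_smul_le_two_sub_min hx hy.le hε hε1 hfy0 (le_of_abs_le hfy)
    fun hyΔ => hfΔ y hyΔ

lemma isDeltaPoint_of_two_le_norm {x : X} (hx : ‖x‖ = 1)
    (hP : ∀ f : X →L[ℝ] ℝ, f x = 1 → 2 ≤ ‖ContinuousLinearMap.id ℝ X - f.smulRight x‖) :
    IsDeltaPoint x := by
  intro ε₀ hε₀
  by_contra hnot
  set ε := min ε₀ 1
  have hε : 0 < ε := lt_min hε₀ one_pos
  have hnot' : x ∉ closure (convexHull ℝ (deltaSet x ε)) := fun h =>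
    hnot (closure_mono (convexHull_mono (deltaSet_mono x (min_le_left _ _))) h)
  obtain ⟨g, u, hgu, hux⟩ :=
    geometric_hahn_banach_closed_point (convex_convexHull ℝ _).closure isClosed_closure hnot'
  obtain ⟨f, η, hη, hfx, hf, hfΔ⟩ := exists_apply_eq_one_norm_le_of_le_lt hx (fun _ hy => hy.1) g
    (fun y hy => (hgu y (subset_closure (subset_convexHull ℝ _ hy))).le) hux (half_pos hε)
  have hlt := norm_id_sub_smulRight_le hx hε.le (min_le_right _ _) hf hfΔ
  linarith [hP f hfx, lt_min hη (half_pos hε)]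

end DeltaPoint

theorem stmt_1_general {X : Type*} [NormedAddCommGroup X] [NormedSpace ℝ X]
    (x : X) (hx : ‖x‖ = 1) :
    (∀ ε > (0 : ℝ),
      x ∈ closure (convexHull ℝ {y : X | ‖y‖ ≤ 1 ∧ 2 - ε ≤ ‖x - y‖})) ↔
    (∀ f : X →L[ℝ] ℝ, f x = 1 →
      2 ≤ ‖ContinuousLinearMap.id ℝ X - f.smulRight x‖) :=
  ⟨fun hΔ => two_le_norm_id_sub_smulRight hx hΔ, fun hP => isDeltaPoint_of_two_le_norm hx hP⟩

/-- `x ∈ S_X` is a Δ-point iff for every `x* ∈ X*` with `x*(x) = 1` the rank-one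
projection `P = x* ⊗ x` (i.e. `P y = x*(y) • x`) satisfies `‖Id - P‖ ≥ 2`. -/
theorem stmt_1 {X : Type*} [NormedAddCommGroup X] [NormedSpace ℝ X] [CompleteSpace X]
    (x : X) (hx : ‖x‖ = 1) :
    (∀ ε > (0 : ℝ),
      x ∈ closure (convexHull ℝ {y : X | ‖y‖ ≤ 1 ∧ 2 - ε ≤ ‖x - y‖})) ↔
    (∀ f : X →L[ℝ] ℝ, f x = 1 →
      2 ≤ ‖ContinuousLinearMap.id ℝ X - f.smulRight x‖) :=
  stmt_1_general x hx
end

section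
/- Let x = (x_i) ∈ ℓ¹ with ‖x‖₁ = 1 and all coordinates x_i nonzero. Let x* = (sign x_i) ∈ ℓ∞ = (ℓ¹)*. Then x*(x) = 1, and the rank-one projection P = x* ⊗ x on ℓ¹ satisfies ‖Id − P‖ = 2. -/
/-!
`‖x*‖ ≤ 1` gives `‖Id - P‖ ≤ 1 + ‖x*‖ ‖x‖ ≤ 2`. Conversely, the unit vector `u = -sign (x i) • e i`
has `x*(u) = -1`, so `(Id - P) u = x + u`, of norm `2 - 2 |x i|`; this tends to `2` because the
coordinates of `x` are summable, hence tend to `0`.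
-/

open Filter Topology
open scoped lp

namespace Real

theorem sign_mul_self_eq_abs (r : ℝ) : sign r * r = |r| := by
  rcases lt_trichotomy r 0 with h | rfl | h
  · rw [sign_of_neg h, abs_of_neg h, neg_one_mul]
  · simp
  · rw [sign_of_pos h, abs_of_pos h, one_mul]

theorem abs_sign_of_ne_zero {r : ℝ} (hr : r ≠ 0) : |sign r| = 1 := by
  rcases sign_apply_eq_of_ne_zero r hr with h | h <;> simp [h]

theorem abs_sub_sign_of_abs_le_one {r : ℝ} (hr₀ : r ≠ 0) (hr : |r| ≤ 1) :
    |r - sign r| = 1 - |r| := by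
  rcases hr₀.lt_or_gt with h | h
  · rw [sign_of_neg h, abs_of_neg h] at *
    rw [abs_of_nonneg (by linarith)]
    ring
  · rw [sign_of_pos h, abs_of_pos h] at *
    rw [abs_of_nonpos (by linarith)]
    ring

end Real

namespace lp

variable {ι : Type*}

theorem norm_eq_tsum_abs (z : ℓ¹(ι, ℝ)) : ‖z‖ = ∑' i, |z i| := by
  simpa using norm_eq_tsum_rpow (by norm_num) z

theorem summable_abs (z : ℓ¹(ι, ℝ)) : Summable fun i => |z i| := by
  simpa using (lp.memℓp z).summable (by norm_num)

theorem abs_tsum_mul_le_norm {c : ι → ℝ} (hc : ∀ i, |c i| ≤ 1) (y : ℓ¹(ι, ℝ)) :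
    |∑' i, c i * y i| ≤ ‖y‖ := by
  have hle : ∀ i, ‖c i * y i‖ ≤ |y i| := fun i => by
    simpa [abs_mul] using mul_le_of_le_one_left (abs_nonneg (y i)) (hc i)
  have hsum : Summable fun i => ‖c i * y i‖ :=
    (summable_abs y).of_nonneg_of_le (fun _ => norm_nonneg _) hle
  calc |∑' i, c i * y i| ≤ ∑' i, ‖c i * y i‖ := norm_tsum_le_tsum_norm hsum
    _ ≤ ∑' i, |y i| := hsum.tsum_le_tsum hle (summable_abs y)
    _ = ‖y‖ := (norm_eq_tsum_abs y).symm

theorem norm_add_single [DecidableEq ι] (x : ℓ¹(ι, ℝ)) (i : ι) (a : ℝ) :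
    ‖x + lp.single 1 i a‖ = ‖x‖ - |x i| + |x i + a| := by
  have hoff : (fun j => if j = i then 0 else |(x + lp.single 1 i a : ℓ¹(ι, ℝ)) j|) =
      fun j => if j = i then 0 else |x j| := by
    funext j
    split_ifs with h
    · rfl
    · simp [h]
  rw [norm_eq_tsum_abs, norm_eq_tsum_abs, (summable_abs _).tsum_eq_add_tsum_ite i,
    (summable_abs x).tsum_eq_add_tsum_ite i, hoff]
  simp only [lp.coeFn_add, Pi.add_apply, lp.single_apply_self]
  ring

end lp

theorem ContinuousLinearMap.norm_id_sub_smulRight_le {𝕜 E : Type*} [NontriviallyNormedField 𝕜]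
    [NormedAddCommGroup E] [NormedSpace 𝕜 E] (f : StrongDual 𝕜 E) (x : E) :
    ‖ContinuousLinearMap.id 𝕜 E - f.smulRight x‖ ≤ 1 + ‖f‖ * ‖x‖ := by
  calc _ ≤ ‖ContinuousLinearMap.id 𝕜 E‖ + ‖f.smulRight x‖ := norm_sub_le _ _
    _ ≤ 1 + ‖f‖ * ‖x‖ := by rw [norm_smulRight_apply]; gcongr; exact norm_id_le

namespace SignFunctional

variable {ι : Type*} {x : ℓ¹(ι, ℝ)} {f : ℓ¹(ι, ℝ) →L[ℝ] ℝ}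

theorem apply_self (hf : ∀ y, f y = ∑' i, Real.sign (x i) * y i) : f x = ‖x‖ := by
  simp only [hf, Real.sign_mul_self_eq_abs, lp.norm_eq_tsum_abs]

theorem norm_le_one (hxi : ∀ i, x i ≠ 0) (hf : ∀ y, f y = ∑' i, Real.sign (x i) * y i) :
    ‖f‖ ≤ 1 :=
  f.opNorm_le_bound zero_le_one fun y => by
    rw [one_mul, Real.norm_eq_abs, hf]
    exact lp.abs_tsum_mul_le_norm (fun i => (Real.abs_sign_of_ne_zero (hxi i)).le) y

theorem apply_single [DecidableEq ι] (hf : ∀ y, f y = ∑' i, Real.sign (x i) * y i)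
    (i : ι) (a : ℝ) : f (lp.single 1 i a) = Real.sign (x i) * a := by
  rw [hf, tsum_eq_single i fun j hj => by simp [hj]]
  simp

theorem two_sub_two_mul_abs_le_norm [DecidableEq ι] (hx : ‖x‖ = 1) (hxi : ∀ i, x i ≠ 0)
    (hf : ∀ y, f y = ∑' i, Real.sign (x i) * y i) (i : ι) :
    2 - 2 * |x i| ≤ ‖ContinuousLinearMap.id ℝ ℓ¹(ι, ℝ) - f.smulRight x‖ := by
  set y : ℓ¹(ι, ℝ) := lp.single 1 i (-Real.sign (x i))
  have hsign := Real.abs_sign_of_ne_zero (hxi i)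
  have hy : ‖y‖ = 1 := by
    rw [lp.norm_single (by norm_num), Real.norm_eq_abs, abs_neg, hsign]
  have hfy : f y = -1 := by
    rw [apply_single hf, mul_neg, ← abs_mul_abs_self, hsign, mul_one]
  have hxi_le : |x i| ≤ 1 := hx ▸ lp.norm_apply_le_norm one_ne_zero x i
  calc 2 - 2 * |x i|
      = ‖x + y‖ := by
        rw [lp.norm_add_single, hx, ← sub_eq_add_neg,
          Real.abs_sub_sign_of_abs_le_one (hxi i) hxi_le]
        ring
    _ = ‖(ContinuousLinearMap.id ℝ ℓ¹(ι, ℝ) - f.smulRight x) y‖ := by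
        simp [hfy, add_comm]
    _ ≤ ‖ContinuousLinearMap.id ℝ ℓ¹(ι, ℝ) - f.smulRight x‖ := by
        simpa [hy] using (ContinuousLinearMap.id ℝ ℓ¹(ι, ℝ) - f.smulRight x).le_opNorm y

end SignFunctional

/-- For a smooth point `x` of the unit sphere of `ℓ¹` (all coordinates nonzero),
the functional `x* = (sign x_i) ∈ ℓ∞ = (ℓ¹)*` satisfies `x*(x) = 1` and the
rank-one projection `P = x* ⊗ x` satisfies `‖Id - P‖ = 2`. -/
theorem stmt_2 (x : lp (fun _ : ℕ => ℝ) 1) (hx : ‖x‖ = 1)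
    (hxi : ∀ i : ℕ, x i ≠ 0)
    (f : lp (fun _ : ℕ => ℝ) 1 →L[ℝ] ℝ)
    (hf : ∀ y : lp (fun _ : ℕ => ℝ) 1, f y = ∑' i : ℕ, Real.sign (x i) * y i) :
    f x = 1 ∧
    ‖ContinuousLinearMap.id ℝ (lp (fun _ : ℕ => ℝ) 1) - f.smulRight x‖ = 2 := by
  refine ⟨(SignFunctional.apply_self hf).trans hx, le_antisymm ?_ ?_⟩
  · calc _ ≤ 1 + ‖f‖ * ‖x‖ := f.norm_id_sub_smulRight_le x
      _ ≤ 1 + 1 * 1 := by rw [hx]; gcongr; exact SignFunctional.norm_le_one hxi hf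
      _ = 2 := by norm_num
  · have hlim : Tendsto (fun i => 2 - 2 * |x i|) cofinite (𝓝 (2 - 2 * 0)) :=
      tendsto_const_nhds.sub (tendsto_const_nhds.mul (lp.summable_abs x).tendsto_cofinite_zero)
    rw [mul_zero, sub_zero] at hlim
    exact le_of_tendsto' hlim (SignFunctional.two_sub_two_mul_abs_le_norm hx hxi hf)
end

section
/- Let x = (x_i) ∈ ℓ¹ with ‖x‖₁ = 1, x₁ ≠ 0, and |x₁| > 1/3. Let P be the projection on ℓ¹ defined by P(y) = (y₁/x₁)·x. Then ‖Id − P‖ < 2. In fact ‖Id − P‖ ≤ 1 + |2 − 1/|x₁||. -/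
/-!
The 0th coordinate of `y - (y₀ / x₀) • x` vanishes and every other one is bounded by
`|yᵢ| + |y₀ / x₀| |xᵢ|`, so `‖y - P y‖ ≤ ‖y‖ + |y₀| (‖x‖ / |x₀| - 2)`. This is affine in
`|y₀| ∈ [0, ‖y‖]`, whence `‖Id - P‖ ≤ max 1 (‖x‖ / |x₀| - 1)`, which is `< 2` once `|x₀| > ‖x‖ / 3`.
-/

namespace lp

variable {E : ℕ → Type*} [∀ i, NormedAddCommGroup (E i)]

theorem summable_norm_of_one (z : lp E 1) : Summable fun i => ‖z i‖ := by
  simpa using (lp.memℓp z).summable (p := 1) (by norm_num)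

theorem norm_eq_tsum_norm_of_one (z : lp E 1) : ‖z‖ = ∑' i, ‖z i‖ := by
  simpa using lp.norm_eq_tsum_rpow (p := 1) (by norm_num) z

theorem norm_eq_norm_zero_add_tsum_succ (z : lp E 1) :
    ‖z‖ = ‖z 0‖ + ∑' i, ‖z (i + 1)‖ := by
  rw [norm_eq_tsum_norm_of_one, (summable_norm_of_one z).tsum_eq_zero_add]

theorem norm_sub_smul_le {𝕜 : Type*} [NormedField 𝕜] [∀ i, NormedSpace 𝕜 (E i)]
    (y x : lp E 1) (c : 𝕜) :
    ‖y - c • x‖ ≤ ‖y 0 - c • x 0‖ + (‖y‖ - ‖y 0‖) + ‖c‖ * (‖x‖ - ‖x 0‖) := by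
  have tail_le : ∑' i, ‖(y - c • x) (i + 1)‖
      ≤ ∑' i, ‖y (i + 1)‖ + ‖c‖ * ∑' i, ‖x (i + 1)‖ := by
    have hy := (summable_nat_add_iff 1).2 (summable_norm_of_one y)
    have hx := (summable_nat_add_iff 1).2 (summable_norm_of_one x)
    rw [← tsum_mul_left, ← hy.tsum_add (hx.mul_left _)]
    refine (summable_nat_add_iff 1).2 (summable_norm_of_one (y - c • x)) |>.tsum_le_tsum
      (fun i => ?_) (hy.add (hx.mul_left _))
    simpa only [lp.coeFn_sub, lp.coeFn_smul, Pi.sub_apply, Pi.smul_apply, norm_smul]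
      using norm_sub_le (y (i + 1)) (c • x (i + 1))
  rw [norm_eq_norm_zero_add_tsum_succ (y - c • x), norm_eq_norm_zero_add_tsum_succ y,
    norm_eq_norm_zero_add_tsum_succ x]
  simp only [lp.coeFn_sub, lp.coeFn_smul, Pi.sub_apply, Pi.smul_apply] at tail_le ⊢
  linarith

variable {𝕜 : Type*} [NontriviallyNormedField 𝕜]

theorem norm_sub_div_smul_le (x y : lp (fun _ : ℕ => 𝕜) 1) (hx0 : x 0 ≠ 0) :
    ‖y - (y 0 / x 0) • x‖ ≤ ‖y‖ + ‖y 0‖ * (‖x‖ / ‖x 0‖ - 2) := by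
  have hx0' : 0 < ‖x 0‖ := norm_pos_iff.2 hx0
  have key := norm_sub_smul_le y x (y 0 / x 0)
  have h0 : ‖y 0 - (y 0 / x 0) • x 0‖ = 0 := by simp [div_mul_cancel₀ _ hx0]
  rw [h0, norm_div] at key
  have hsplit : ‖y 0‖ / ‖x 0‖ * (‖x‖ - ‖x 0‖) = ‖y 0‖ * (‖x‖ / ‖x 0‖) - ‖y 0‖ := by
    field_simp
  linarith

theorem norm_id_sub_le_max (x : lp (fun _ : ℕ => 𝕜) 1) (hx0 : x 0 ≠ 0)
    (P : lp (fun _ : ℕ => 𝕜) 1 →L[𝕜] lp (fun _ : ℕ => 𝕜) 1)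
    (hP : ∀ y : lp (fun _ : ℕ => 𝕜) 1, P y = (y 0 / x 0) • x) :
    ‖ContinuousLinearMap.id 𝕜 _ - P‖ ≤ max 1 (‖x‖ / ‖x 0‖ - 1) := by
  refine ContinuousLinearMap.opNorm_le_bound _ (zero_le_one.trans (le_max_left _ _)) fun y => ?_
  rw [sub_apply, ContinuousLinearMap.id_apply, hP]
  have hy0 : ‖y 0‖ ≤ ‖y‖ := lp.norm_apply_le_norm one_ne_zero y 0
  refine (norm_sub_div_smul_le x y hx0).trans ?_
  rcases le_total (‖x‖ / ‖x 0‖) 2 with h | h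
  · nlinarith [norm_nonneg (y 0), le_max_left 1 (‖x‖ / ‖x 0‖ - 1)]
  · nlinarith [norm_nonneg y, le_max_right 1 (‖x‖ / ‖x 0‖ - 1)]

end lp

/-- If `x ∈ ℓ¹` has norm one, first coordinate `x₀ ≠ 0` with `|x₀| > 1/3`, then
the rank-one projection `P y = (y₀ / x₀) • x` satisfies
`‖Id - P‖ ≤ 1 + |2 - 1/|x₀||` and in particular `‖Id - P‖ < 2`. -/
theorem stmt_3 (x : lp (fun _ : ℕ => ℝ) 1) (hx : ‖x‖ = 1)
    (hx0 : x 0 ≠ 0) (hx0' : (1 : ℝ) / 3 < |x 0|)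
    (P : lp (fun _ : ℕ => ℝ) 1 →L[ℝ] lp (fun _ : ℕ => ℝ) 1)
    (hP : ∀ y : lp (fun _ : ℕ => ℝ) 1, P y = (y 0 / x 0) • x) :
    ‖ContinuousLinearMap.id ℝ (lp (fun _ : ℕ => ℝ) 1) - P‖ ≤ 1 + abs (2 - 1 / |x 0|) ∧
    ‖ContinuousLinearMap.id ℝ (lp (fun _ : ℕ => ℝ) 1) - P‖ < 2 := by
  have hbound := lp.norm_id_sub_le_max x hx0 P hP
  rw [hx, Real.norm_eq_abs] at hbound
  have hpos : 0 < |x 0| := abs_pos.2 hx0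
  have hlt : 1 / |x 0| < 3 := by rw [div_lt_iff₀ hpos]; linarith
  refine ⟨hbound.trans (max_le ?_ ?_), hbound.trans_lt (max_lt one_lt_two (by linarith))⟩
  · linarith [abs_nonneg (2 - 1 / |x 0|)]
  · linarith [neg_abs_le (2 - 1 / |x 0|)]
end

section
/- Let X be a real Banach space. If X* has the diametral local diameter two property (i.e. every point of S_{X*} is a Δ-point), then X has the diametral local diameter two property: every x ∈ S_X satisfies x ∈ cl conv Δ_ε(x) for all ε > 0. Equivalently: if ‖Id_{X*} − P‖ ≥ 2 for every rank-one projection P on X*, then ‖Id_X − Q‖ ≥ 2 for every rank-one projection Q on X. -/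
/-- From membership in the closed convex hull, extract a point of the set on which a
continuous linear functional is almost as large as at the given point. -/
lemma stmt_4_aux {E : Type*} [NormedAddCommGroup E] [NormedSpace ℝ E]
    (Φ : E →L[ℝ] ℝ) {s : Set E} {p : E} (hp : p ∈ closure (convexHull ℝ s))
    {η : ℝ} (hη : 0 < η) : ∃ q ∈ s, Φ p - η < Φ q := by
  by_contra hc
  push_neg at hc
  have hsub : closure (convexHull ℝ s) ⊆ {w | Φ w ≤ Φ p - η} := by
    refine closure_minimal (convexHull_min (fun q hq => hc q hq) ?_) ?_
    · exact convex_halfSpace_le ⟨Φ.map_add, Φ.map_smul⟩ _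
    · exact IsClosed.preimage Φ.continuous isClosed_Iic
  have := hsub hp
  simp only [Set.mem_setOf_eq] at this
  linarith

set_option maxHeartbeats 1000000

/-- If the dual `X*` has the diametral local diameter two property (every point
of its unit sphere is a Δ-point), then so does `X`. -/
theorem stmt_4 {X : Type*} [NormedAddCommGroup X] [NormedSpace ℝ X] [CompleteSpace X]
    (h : ∀ f : X →L[ℝ] ℝ, ‖f‖ = 1 → ∀ ε > (0 : ℝ),
      f ∈ closure (convexHull ℝ {g : X →L[ℝ] ℝ | ‖g‖ ≤ 1 ∧ 2 - ε ≤ ‖f - g‖})) :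
    ∀ x : X, ‖x‖ = 1 → ∀ ε > (0 : ℝ),
      x ∈ closure (convexHull ℝ {y : X | ‖y‖ ≤ 1 ∧ 2 - ε ≤ ‖x - y‖}) := by
  intro x hx ε hε
  by_cases hε2 : 2 ≤ ε
  · exact subset_closure (subset_convexHull ℝ _ ⟨le_of_eq hx, by simp; linarith⟩)
  push_neg at hε2
  by_contra hxC
  set Δ : Set X := {y : X | ‖y‖ ≤ 1 ∧ 2 - ε ≤ ‖x - y‖} with hΔ
  obtain ⟨f₁, u, hfu, hux⟩ :=
    geometric_hahn_banach_closed_point ((convex_convexHull ℝ Δ).closure) isClosed_closure hxC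
  have hx2 : x - -x = (2:ℝ) • x := by module
  have hnegx : -x ∈ closure (convexHull ℝ Δ) := by
    refine subset_closure (subset_convexHull ℝ _ ⟨by simp [hx], ?_⟩)
    rw [hx2, norm_smul ((2:ℝ)) x, hx]
    norm_num; linarith
  have hnegfu := hfu _ hnegx
  rw [map_neg] at hnegfu
  have hf₁ : f₁ ≠ 0 := by
    intro h0
    rw [h0] at hux hnegfu
    simp at hux hnegfu
    linarith
  have hnf : (0:ℝ) < ‖f₁‖ := norm_pos_iff.2 hf₁
  set f : X →L[ℝ] ℝ := ‖f₁‖⁻¹ • f₁ with hfdef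
  set α : ℝ := u / ‖f₁‖ with hαdef
  have hfnorm : ‖f‖ = 1 := by
    rw [hfdef, norm_smul (‖f₁‖⁻¹) f₁, norm_inv, norm_norm, inv_mul_cancel₀ (ne_of_gt hnf)]
  have hfapp : ∀ w : X, f w = ‖f₁‖⁻¹ * f₁ w := fun w => rfl
  have hfx : α < f x := by
    rw [hαdef, hfapp, div_lt_iff₀ hnf, mul_comm, ← mul_assoc,
      mul_inv_cancel₀ (ne_of_gt hnf), one_mul]
    exact hux
  have hfz : ∀ z ∈ Δ, f z < α := by
    intro z hz
    have hz' := hfu z (subset_closure (subset_convexHull ℝ _ hz))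
    rw [hαdef, hfapp, lt_div_iff₀ hnf, mul_comm, ← mul_assoc,
      mul_inv_cancel₀ (ne_of_gt hnf), one_mul]
    exact hz'
  have hfx1 : f x ≤ 1 := by
    calc f x ≤ ‖f x‖ := le_abs_self _
    _ ≤ ‖f‖ * ‖x‖ := f.le_opNorm x
    _ = 1 := by rw [hfnorm, hx]; ring
  have hfxm1 : -1 ≤ f x := by
    have h1 : ‖f x‖ ≤ 1 := by
      calc ‖f x‖ ≤ ‖f‖ * ‖x‖ := f.le_opNorm x
      _ = 1 := by rw [hfnorm, hx]; ring
    have h2 := neg_abs_le (f x)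
    simp only [Real.norm_eq_abs] at h1
    linarith
  -- norming functional for x
  obtain ⟨f₀, hf₀n, hf₀x'⟩ := exists_dual_vector ℝ x (by
    intro h0; rw [h0] at hx; simp at hx)
  have hf₀x : f₀ x = 1 := by rw [hf₀x', hx]; norm_num
  set c : ℝ := ε / 4 with hcdef
  have hc0 : 0 < c := by positivity
  have hc2 : c < 1/2 := by rw [hcdef]; linarith
  set F : X →L[ℝ] ℝ := f₀ + c • f with hFdef
  set N : ℝ := ‖F‖ with hNdef
  have hFapp : ∀ w : X, F w = f₀ w + c * f w := fun w => rfl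
  have hFx : F x = 1 + c * f x := by rw [hFapp, hf₀x]
  have hNx : 1 + c * f x ≤ N := by
    calc 1 + c * f x = F x := hFx.symm
    _ ≤ ‖F x‖ := le_abs_self _
    _ ≤ ‖F‖ * ‖x‖ := F.le_opNorm x
    _ = N := by rw [hx, hNdef]; ring
  have hN0 : (0:ℝ) < N := by nlinarith
  have hNle : N ≤ 1 + c := by
    calc N ≤ ‖f₀‖ + ‖c • f‖ := norm_add_le _ _
    _ = 1 + c := by
        rw [hf₀n, norm_smul c f, hfnorm, Real.norm_eq_abs, abs_of_pos hc0]; ring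
  set H : X →L[ℝ] ℝ := N⁻¹ • F with hHdef
  have hHapp : ∀ w : X, H w = N⁻¹ * F w := fun w => rfl
  have hHn : ‖H‖ = 1 := by
    rw [hHdef, norm_smul (N⁻¹) F, norm_inv, Real.norm_eq_abs, abs_of_pos hN0, ← hNdef,
      inv_mul_cancel₀ (ne_of_gt hN0)]
  have hHx : 1 - 2*c ≤ H x := by
    have key : (1 - 2*c) * N ≤ 1 + c * f x := by nlinarith
    calc 1 - 2*c = N⁻¹ * ((1 - 2*c) * N) := by
          field_simp
    _ ≤ N⁻¹ * (1 + c * f x) := by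
          apply mul_le_mul_of_nonneg_left key (by positivity)
    _ = H x := by rw [hHapp, hFx]
  set ε' : ℝ := min (ε/16) (c*(f x - α)/4) with hε'def
  have hε'0 : 0 < ε' := by
    apply lt_min (by linarith) (by nlinarith [sub_pos.2 hfx])
  have hε'a : ε' ≤ ε/16 := min_le_left _ _
  have hε'b : ε' ≤ c*(f x - α)/4 := min_le_right _ _
  -- apply the Δ-point property of H
  have hHmem := h H hHn ε' hε'0
  obtain ⟨g, ⟨hg1, hgfar⟩, hgx⟩ :=
    stmt_4_aux (ContinuousLinearMap.apply ℝ ℝ x) hHmem (show (0:ℝ) < ε/8 by linarith)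
  simp only [ContinuousLinearMap.apply_apply] at hgx
  -- find a nearly norming vector for H - g
  obtain ⟨z₀, hz₀1, hz₀v⟩ := (H - g).exists_lt_apply_of_lt_opNorm
    (show 2 - 2*ε' < ‖H - g‖ by linarith)
  set z : X := if 0 ≤ (H - g) z₀ then z₀ else -z₀ with hzdef
  have hz1 : ‖z‖ ≤ 1 := by
    rw [hzdef]; split_ifs with h0
    · linarith
    · rw [norm_neg]; linarith
  have hHgz : 2 - 2*ε' < H z - g z := by
    have h1 : 2 - 2*ε' < (H - g) z := by
      rw [hzdef]
      split_ifs with h0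
      · rwa [Real.norm_eq_abs, abs_of_nonneg h0] at hz₀v
      · rw [map_neg]
        rw [Real.norm_eq_abs, abs_of_neg (lt_of_not_ge h0)] at hz₀v
        linarith
    simpa using h1
  have hgz1 : ‖g z‖ ≤ 1 := by
    calc ‖g z‖ ≤ ‖g‖ * ‖z‖ := g.le_opNorm z
    _ ≤ 1 := by nlinarith [norm_nonneg g, norm_nonneg z]
  have hgzm : -1 ≤ g z := by
    have h2 := neg_abs_le (g z); simp only [Real.norm_eq_abs] at hgz1; linarith
  have hHz1 : H z ≤ 1 := by
    calc H z ≤ ‖H z‖ := le_abs_self _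
    _ ≤ ‖H‖ * ‖z‖ := H.le_opNorm z
    _ ≤ 1 := by rw [hHn]; linarith
  have hHz : 1 - 2*ε' < H z := by linarith
  have hgz : g z < -1 + 2*ε' := by linarith
  -- z is far from x
  have hfar : 2 - ε ≤ ‖x - z‖ := by
    have h1 : g (x - z) ≤ ‖x - z‖ := by
      calc g (x - z) ≤ ‖g (x - z)‖ := le_abs_self _
      _ ≤ ‖g‖ * ‖x - z‖ := g.le_opNorm _
      _ ≤ ‖x - z‖ := mul_le_of_le_one_left (norm_nonneg _) hg1
    have h2 : g (x - z) = g x - g z := by simp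
    have h3 : 2 - 2*c - ε/8 - 2*ε' < g x - g z := by linarith
    rw [hcdef] at h3
    linarith
  -- z is in the slice: f z > α
  have hslice : α < f z := by
    have hf₀z : f₀ z ≤ 1 := by
      calc f₀ z ≤ ‖f₀ z‖ := le_abs_self _
      _ ≤ ‖f₀‖ * ‖z‖ := f₀.le_opNorm z
      _ ≤ 1 := by rw [hf₀n]; linarith
    have h1 : (1 - 2*ε') * N < f₀ z + c * f z := by
      have h1' := mul_lt_mul_of_pos_right hHz hN0
      calc (1 - 2*ε') * N < H z * N := h1'
      _ = f₀ z + c * f z := by rw [hHapp, hFapp]; field_simp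
    have h2 : (1 - 2*ε') * (1 + c * f x) ≤ (1 - 2*ε') * N := by
      apply mul_le_mul_of_nonneg_left hNx
      linarith
    have hexp : (1 - 2*ε') * (1 + c * f x) = 1 + c * f x - 2*ε' - 2*ε' * (c * f x) := by
      ring
    have h3 : c * f z > c * f x - 2*ε' - 2*ε' * (c * f x) := by linarith
    have hcfx : c * f x ≤ 1/2 := by
      have := mul_le_mul_of_nonneg_left hfx1 (le_of_lt hc0)
      simp only [mul_one] at this
      linarith
    have hsm : 2*ε' * (c * f x) ≤ 2*ε' * (1/2) := by
      apply mul_le_mul_of_nonneg_left hcfx (by linarith)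
    have h4 : c * f z > c * f x - 3*ε' := by linarith
    have hpos : 0 < c * (f x - α) := mul_pos hc0 (sub_pos.2 hfx)
    have h5 : 3*ε' < c * (f x - α) := by linarith
    have hexp2 : c * (f x - α) = c * f x - c * α := by ring
    have h6 : c * α < c * f z := by linarith
    exact (mul_lt_mul_iff_right₀ hc0).1 h6
  have hzΔ : z ∈ Δ := ⟨hz1, hfar⟩
  have hcontra := hfz z hzΔ
  linarith
end

section
/- Let X be a real Banach space such that ‖Id − P‖ = 2 for every norm-one rank-one projection P on X. Then X has the local diameter two property: every slice S(x*, ε) = {x ∈ B_X : x*(x) > 1 − ε} with x* ∈ S_{X*}, ε > 0, has diameter 2. -/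
/-!
Ekeland's variational principle on the unit ball gives a point `x` near which `g` grows more
slowly than `κ * ‖· - x‖`. Separating the ball from the open convex set
`{y | g x + κ ‖y - x‖ < g y}` yields a norm-one `F` with `F x = 1` that is positive on the cone
`{y | κ ‖y‖ < g y}`; writing `y` as a multiple of `x` plus an element of `ker g` shows that
`‖F - g‖ = O(κ)` (Bishop–Phelps). Now `F.smulRight x` is a norm-one rank-one projection, so some
`z` in the unit ball has `‖z - F z • x‖` close to `2`; up to sign, `F z` is then close to `1` and
`‖z - x‖` close to `2`. As `F` is close to `g`, both `z` and `x` lie in the slice.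
-/

open Filter Topology Set Metric

theorem exists_forall_le_add_mul_dist {α : Type*} [MetricSpace α] [CompleteSpace α]
    {f : α → ℝ} (hf : Continuous f) (hbdd : BddAbove (range f)) {c : ℝ} (hc : 0 < c)
    (x₀ : α) : ∃ x, f x₀ ≤ f x ∧ ∀ y, f y ≤ f x + c * dist y x := by
  set S : α → Set α := fun x => {y | f x + c * dist y x ≤ f y}
  have self_mem (x : α) : x ∈ S x := by simp [S]
  have mem_trans {x y z : α} (hy : y ∈ S x) (hz : z ∈ S y) : z ∈ S x := by
    simp only [S, mem_ofPred_eq] at *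
    nlinarith [dist_triangle z y x]
  have step (n : ℕ) (x : α) : ∃ y ∈ S x, ∀ y' ∈ S x, f y' ≤ f y + (1 / 2) ^ n := by
    obtain ⟨_, ⟨y, hy, rfl⟩, hlt⟩ := exists_lt_of_lt_csSup (⟨f x, mem_image_of_mem f (self_mem x)⟩)
      (sub_lt_self (sSup (f '' S x)) (pow_pos one_half_pos n))
    refine ⟨y, hy, fun y' hy' => ?_⟩
    linarith [le_csSup (hbdd.mono (image_subset_range f _)) (mem_image_of_mem f hy')]
  choose next next_mem next_max using step
  let u : ℕ → α := fun n => Nat.rec x₀ next n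
  have u_mono (n m : ℕ) (hnm : n ≤ m) : u m ∈ S (u n) := by
    induction m, hnm using Nat.le_induction with
    | base => exact self_mem _
    | succ m _ ih => exact mem_trans ih (next_mem m (u m))
  have dist_le (n : ℕ) (y : α) (hy : y ∈ S (u (n + 1))) : dist y (u (n + 1)) ≤ (1 / 2) ^ n / c := by
    have hmax := next_max n (u n) y (mem_trans (next_mem n (u n)) hy)
    simp only [S, mem_ofPred_eq] at hy
    rw [le_div_iff₀ hc]
    change f (next n (u n)) + c * dist y (next n (u n)) ≤ f y at hy
    linarith
  have hb : Tendsto (fun n : ℕ => 2 * ((1 / 2 : ℝ) ^ n / c)) atTop (𝓝 0) := by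
    simpa using ((tendsto_pow_atTop_nhds_zero_of_lt_one (r := (1 / 2 : ℝ)) (by norm_num)
      (by norm_num)).div_const c).const_mul 2
  have cauchy : CauchySeq (fun n => u (n + 1)) := by
    refine cauchySeq_of_le_tendsto_0 _ (fun m k N hm hk => ?_) hb
    calc dist (u (m + 1)) (u (k + 1))
        ≤ dist (u (m + 1)) (u (N + 1)) + dist (u (k + 1)) (u (N + 1)) := dist_triangle_right _ _ _
      _ ≤ 2 * ((1 / 2) ^ N / c) := by
          linarith [dist_le N _ (u_mono (N + 1) (m + 1) (by omega)),
            dist_le N _ (u_mono (N + 1) (k + 1) (by omega))]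
  obtain ⟨x, hx⟩ := cauchySeq_tendsto_of_complete cauchy
  have x_mem (n : ℕ) : x ∈ S (u n) :=
    (isClosed_le (by fun_prop) hf).mem_of_tendsto hx
      (eventually_atTop.2 ⟨n, fun m hm => u_mono n (m + 1) (by omega)⟩)
  refine ⟨x, by simpa [S] using (x_mem 0).trans' (le_add_of_nonneg_right (by positivity)),
    fun y => ?_⟩
  by_contra! hy
  have hyS (n : ℕ) : y ∈ S (u (n + 1)) := mem_trans (x_mem (n + 1)) hy.le
  have hy_lim : Tendsto (fun n => u (n + 1)) atTop (𝓝 y) := by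
    refine tendsto_iff_dist_tendsto_zero.2 (squeeze_zero (fun _ => dist_nonneg) (fun n => ?_) hb)
    rw [dist_comm]
    linarith [dist_le n y (hyS n), div_nonneg (pow_nonneg (one_half_pos (α := ℝ)).le n) hc.le]
  rw [tendsto_nhds_unique hx hy_lim] at hy
  simp at hy

section Dual

variable {X : Type*} [NormedAddCommGroup X] [NormedSpace ℝ X]

theorem abs_apply_le_of_opNorm_le_one {f : X →L[ℝ] ℝ} (hf : ‖f‖ ≤ 1) (y : X) : |f y| ≤ ‖y‖ := by
  simpa using f.le_of_opNorm_le hf y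

theorem exists_norm_le_one_lt_apply (g : X →L[ℝ] ℝ) {r : ℝ} (hr : r < ‖g‖) :
    ∃ x : X, ‖x‖ ≤ 1 ∧ r < g x := by
  obtain ⟨x, hx, hgx⟩ := g.exists_lt_apply_of_lt_opNorm hr
  rcases le_total 0 (g x) with h | h
  · exact ⟨x, hx.le, by rwa [Real.norm_eq_abs, abs_of_nonneg h] at hgx⟩
  · refine ⟨-x, by rw [norm_neg]; exact hx.le, ?_⟩
    rwa [map_neg, ← abs_of_nonpos h, ← Real.norm_eq_abs]

theorem exists_norm_eq_one_apply_eq_one_of_disjoint_closedBall {s : Set X} (hs : Convex ℝ s)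
    (hso : IsOpen s) (hne : s.Nonempty) (hdisj : Disjoint s (closedBall 0 1)) {x : X}
    (hx : ‖x‖ ≤ 1) (hxs : x ∈ closure s) :
    ∃ F : X →L[ℝ] ℝ, ‖F‖ = 1 ∧ F x = 1 ∧ ∀ y ∈ s, 1 < F y := by
  obtain ⟨f, u, hfs, hfb⟩ := geometric_hahn_banach_open hs hso (convex_closedBall 0 1) hdisj
  set G : X →L[ℝ] ℝ := -f
  have hG_ball (b : X) (hb : ‖b‖ ≤ 1) : G b ≤ -u := by
    simp only [G, neg_apply]
    linarith [hfb b (mem_closedBall_zero_iff.2 hb)]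
  have hG_s (a : X) (ha : a ∈ s) : -u < G a := by
    simp only [G, neg_apply]
    linarith [hfs a ha]
  have hu_nonneg : 0 ≤ -u := by simpa using hG_ball 0 (by simp)
  have hnorm_le : ‖G‖ ≤ -u := by
    refine ContinuousLinearMap.opNorm_le_of_unit_norm hu_nonneg
      fun b hb => abs_le.2 ⟨?_, hG_ball b hb.le⟩
    linarith [hG_ball (-b) (by rw [norm_neg, hb]), map_neg G b]
  have hx_ge : -u ≤ G x :=
    closure_minimal (fun a ha => (hG_s a ha).le) (isClosed_le continuous_const G.continuous) hxs
  have hx_le : G x ≤ ‖G‖ :=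
    (le_abs_self _).trans <| (G.le_opNorm x).trans (mul_le_of_le_one_right (norm_nonneg _) hx)
  have hGx : G x = -u := by linarith
  have hu_pos : 0 < -u := by
    obtain ⟨a, ha⟩ := hne
    refine hu_nonneg.lt_of_ne fun hu0 => ?_
    have := G.le_opNorm a
    rw [show ‖G‖ = 0 by linarith, zero_mul, Real.norm_eq_abs] at this
    linarith [hG_s a ha, le_abs_self (G a)]
  refine ⟨(-u)⁻¹ • G, ?_, ?_, fun y hy => ?_⟩
  · rw [norm_smul, show ‖G‖ = -u by linarith, norm_inv, Real.norm_eq_abs, abs_of_pos hu_pos,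
      inv_mul_cancel₀ hu_pos.ne']
  · rw [smul_apply, smul_eq_mul, hGx, inv_mul_cancel₀ hu_pos.ne']
  · rw [smul_apply, smul_eq_mul, ← div_eq_inv_mul, one_lt_div hu_pos]
    exact hG_s y hy

theorem norm_sub_le_of_nonneg_on_cone {F g : X →L[ℝ] ℝ} {x : X} {μ : ℝ} (hF : ‖F‖ ≤ 1)
    (hg : ‖g‖ ≤ 1) (hx : ‖x‖ ≤ 1) (hFx : F x = 1) (hμ : 0 ≤ μ) (hμx : μ < g x)
    (hcone : ∀ y, μ * ‖y‖ ≤ g y → 0 ≤ F y) :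
    ‖F - g‖ ≤ (1 - g x) + 2 * μ / (g x - μ) := by
  set a := g x
  have ha : a ≤ 1 := (le_abs_self a).trans ((abs_apply_le_of_opNorm_le_one hg x).trans hx)
  have kernel_lower (z : X) (hz : g z = 0) : -(μ * ‖z‖) ≤ (a - μ) * F z := by
    set w := (μ * ‖z‖) • x + (a - μ) • z
    have hw : ‖w‖ ≤ a * ‖z‖ :=
      calc ‖w‖ ≤ ‖(μ * ‖z‖) • x‖ + ‖(a - μ) • z‖ := norm_add_le _ _
        _ = μ * ‖z‖ * ‖x‖ + (a - μ) * ‖z‖ := by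
          rw [norm_smul, norm_smul, Real.norm_of_nonneg (by positivity),
            Real.norm_of_nonneg (by linarith)]
        _ ≤ a * ‖z‖ := by nlinarith [mul_le_mul_of_nonneg_left hx (by positivity : 0 ≤ μ * ‖z‖)]
    have hgw : g w = μ * ‖z‖ * a := by
      simp only [w, map_add, map_smul, smul_eq_mul, hz, mul_zero, add_zero]; rfl
    have hFw : F w = μ * ‖z‖ + (a - μ) * F z := by simp [w, hFx]
    have := hcone w (by rw [hgw]; nlinarith [norm_nonneg z])
    linarith
  have kernel (z : X) (hz : g z = 0) : (a - μ) * |F z| ≤ μ * ‖z‖ := by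
    have := abs_le.2 ⟨kernel_lower z hz, by simpa using kernel_lower (-z) (by simp [hz])⟩
    rwa [abs_mul, abs_of_pos (sub_pos.2 hμx)] at this
  refine ContinuousLinearMap.opNorm_le_bound _ (by have := sub_pos.2 hμx; positivity) fun y => ?_
  set z := a • y - g y • x
  have hz : ‖z‖ ≤ 2 * ‖y‖ :=
    calc ‖z‖ ≤ a * ‖y‖ + |g y| * ‖x‖ := by
          simpa [norm_smul, abs_of_pos (hμ.trans_lt hμx)] using norm_sub_le (a • y) (g y • x)
      _ ≤ 2 * ‖y‖ := by
          nlinarith [abs_apply_le_of_opNorm_le_one hg y, abs_nonneg (g y), norm_nonneg y]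
  have hFz : |F z| ≤ 2 * μ / (a - μ) * ‖y‖ := by
    rw [div_mul_eq_mul_div, le_div_iff₀ (sub_pos.2 hμx), mul_comm]
    nlinarith [kernel z (by simp only [z, map_sub, map_smul, smul_eq_mul]; ring)]
  have hsplit : (F - g) y = (1 - a) * F y + F z := by simp [z, hFx]; ring
  rw [hsplit, Real.norm_eq_abs]
  calc |(1 - a) * F y + F z| ≤ (1 - a) * |F y| + |F z| := by
        simpa [abs_mul, abs_of_nonneg (sub_nonneg.2 ha)] using abs_add_le ((1 - a) * F y) (F z)
    _ ≤ ((1 - a) + 2 * μ / (a - μ)) * ‖y‖ := by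
        nlinarith [abs_apply_le_of_opNorm_le_one hF y, sub_nonneg.2 ha]

theorem exists_far_of_lt_norm_id_sub_smulRight {F : X →L[ℝ] ℝ} {x : X} (hF : ‖F‖ ≤ 1)
    (hx : ‖x‖ ≤ 1) {δ : ℝ} (hP : 2 - δ < ‖ContinuousLinearMap.id ℝ X - F.smulRight x‖) :
    ∃ z : X, ‖z‖ ≤ 1 ∧ 1 - δ < F z ∧ 2 - 2 * δ < ‖z - x‖ := by
  have far (z : X) (hz : ‖z‖ ≤ 1) (hFz : 0 ≤ F z) (h : 2 - δ < ‖z - F z • x‖) :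
      1 - δ < F z ∧ 2 - 2 * δ < ‖z - x‖ := by
    have hFz1 : F z ≤ 1 := (le_abs_self _).trans ((abs_apply_le_of_opNorm_le_one hF z).trans hz)
    have hFzx : ‖F z • x‖ ≤ F z := by
      rw [norm_smul, Real.norm_of_nonneg hFz]; exact mul_le_of_le_one_right hFz hx
    have hrest : ‖(1 - F z) • x‖ ≤ 1 - F z := by
      rw [norm_smul, Real.norm_of_nonneg (sub_nonneg.2 hFz1)]
      exact mul_le_of_le_one_right (sub_nonneg.2 hFz1) hx
    have hle_z := norm_sub_le z (F z • x)
    have hle_zx : ‖z - F z • x‖ ≤ ‖z - x‖ + ‖(1 - F z) • x‖ := by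
      simpa [sub_smul, sub_add_sub_comm] using norm_add_le (z - x) ((1 - F z) • x)
    constructor <;> linarith
  obtain ⟨z, hz, hPz⟩ :=
    (ContinuousLinearMap.id ℝ X - F.smulRight x).exists_lt_apply_of_lt_opNorm hP
  simp only [sub_apply, ContinuousLinearMap.id_apply,
    ContinuousLinearMap.smulRight_apply] at hPz
  rcases le_total 0 (F z) with h | h
  · exact ⟨z, hz.le, far z hz.le h hPz⟩
  · have hz' : ‖-z‖ ≤ 1 := by rw [norm_neg]; exact hz.le
    refine ⟨-z, hz', far (-z) hz' (by simpa using h) ?_⟩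
    rwa [map_neg, neg_smul, sub_neg_eq_add, ← norm_neg, neg_add', neg_neg]

theorem exists_forall_le_add_mul_norm_sub [CompleteSpace X] (g : X →L[ℝ] ℝ) {c : ℝ}
    (hc : 0 < c) {x₀ : X} (hx₀ : ‖x₀‖ ≤ 1) :
    ∃ x : X, ‖x‖ ≤ 1 ∧ g x₀ ≤ g x ∧ ∀ y, ‖y‖ ≤ 1 → g y ≤ g x + c * ‖y - x‖ := by
  have : CompleteSpace (closedBall (0 : X) 1) := isClosed_closedBall.completeSpace_coe
  have hbdd : BddAbove (range fun y : closedBall (0 : X) 1 => g y) := by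
    refine ⟨‖g‖ * 1, ?_⟩
    rintro _ ⟨⟨y, hy⟩, rfl⟩
    exact (le_abs_self _).trans (g.le_opNorm_of_le (mem_closedBall_zero_iff.1 hy))
  obtain ⟨⟨x, hx⟩, hgx, hmax⟩ :=
    exists_forall_le_add_mul_dist (by fun_prop) hbdd hc ⟨x₀, mem_closedBall_zero_iff.2 hx₀⟩
  refine ⟨x, mem_closedBall_zero_iff.1 hx, hgx, fun y hy => ?_⟩
  simpa [Subtype.dist_eq, dist_eq_norm] using hmax ⟨y, mem_closedBall_zero_iff.2 hy⟩

theorem exists_supporting_functional_of_forall_le_add {g : X →L[ℝ] ℝ} {c : ℝ} (hc : 0 ≤ c)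
    (hcg : c < ‖g‖) {x : X} (hx : ‖x‖ ≤ 1)
    (hmax : ∀ y, ‖y‖ ≤ 1 → g y ≤ g x + c * ‖y - x‖) :
    ∃ F : X →L[ℝ] ℝ, ‖F‖ = 1 ∧ F x = 1 ∧ ∀ y, c * ‖y‖ < g y → 0 < F y := by
  set s := {y : X | g x + c * ‖y - x‖ < g y}
  have add_mem (y : X) (hy : c * ‖y‖ < g y) : x + y ∈ s := by
    simpa [s] using hy
  obtain ⟨w, hw, hgw⟩ := exists_norm_le_one_lt_apply g hcg
  have smul_w (t : ℝ) (ht : 0 < t) : c * ‖t • w‖ < g (t • w) := by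
    rw [norm_smul, Real.norm_of_nonneg ht.le, map_smul, smul_eq_mul]
    nlinarith [mul_le_mul_of_nonneg_left hw hc]
  have hs_convex : Convex ℝ s := by
    have hconv : ConvexOn ℝ univ fun y => c * dist y x - g y :=
      ((convexOn_univ_dist x).smul hc).sub (g.toLinearMap.concaveOn convex_univ)
    convert hconv.convex_lt (-g x) using 1
    ext y
    simp only [s, mem_ofPred_eq, mem_univ, true_and, dist_eq_norm]
    constructor <;> intro <;> linarith
  have hs_open : IsOpen s := isOpen_lt (by fun_prop) g.continuous
  have hdisj : Disjoint s (closedBall 0 1) := Set.disjoint_left.2 fun y hy hy' =>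
    (hmax y (mem_closedBall_zero_iff.1 hy')).not_gt hy
  have hx_closure : x ∈ closure s := by
    refine mem_closure_of_tendsto (f := fun t : ℝ => x + t • w) (b := 𝓝[>] 0) ?_
      (eventually_nhdsWithin_of_forall fun t ht => add_mem _ (smul_w t ht))
    simpa using (((tendsto_id (x := 𝓝 (0 : ℝ))).smul_const w).const_add x).mono_left
      nhdsWithin_le_nhds
  obtain ⟨F, hF, hFx, hFs⟩ := exists_norm_eq_one_apply_eq_one_of_disjoint_closedBall hs_convex
    hs_open ⟨x + 1 • w, add_mem _ (smul_w 1 one_pos)⟩ hdisj hx hx_closure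
  refine ⟨F, hF, hFx, fun y hy => ?_⟩
  have := hFs _ (add_mem y hy)
  rw [map_add, hFx] at this
  linarith

theorem bishop_phelps [CompleteSpace X] {g : X →L[ℝ] ℝ} (hg : ‖g‖ = 1) {κ : ℝ} (hκ : 0 < κ)
    (hκ' : κ ≤ 1 / 6) :
    ∃ F : X →L[ℝ] ℝ, ∃ x : X, ‖F‖ = 1 ∧ ‖x‖ = 1 ∧ F x = 1 ∧ 1 - κ < g x ∧ ‖F - g‖ ≤ 9 * κ := by
  obtain ⟨x₀, hx₀, hgx₀⟩ := exists_norm_le_one_lt_apply g (r := 1 - κ) (by linarith)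
  obtain ⟨x, hx, hgx, hmax⟩ := exists_forall_le_add_mul_norm_sub g hκ hx₀
  obtain ⟨F, hF, hFx, hFpos⟩ :=
    exists_supporting_functional_of_forall_le_add hκ.le (by linarith) hx hmax
  have hcone (y : X) (hy : 2 * κ * ‖y‖ ≤ g y) : 0 ≤ F y := by
    rcases eq_or_ne y 0 with rfl | hy0
    · simp
    exact (hFpos y (by nlinarith [norm_pos_iff.2 hy0])).le
  have hgx' : 1 - κ < g x := hgx₀.trans_le hgx
  refine ⟨F, x, hF, le_antisymm hx ?_, hFx, hgx', ?_⟩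
  · simpa [hF, hFx] using F.le_opNorm x
  refine (norm_sub_le_of_nonneg_on_cone hF.le hg.le hx hFx (by positivity) (by linarith)
    hcone).trans ?_
  have : 2 * (2 * κ) / (g x - 2 * κ) ≤ 8 * κ := by
    rw [div_le_iff₀ (by linarith)]; nlinarith
  linarith

end Dual

theorem diam_eq_of_subset_closedBall {α : Type*} [PseudoMetricSpace α] {s : Set α} {c : α}
    {r : ℝ} (hs : s ⊆ closedBall c r) (h : ∀ δ > 0, ∃ u ∈ s, ∃ v ∈ s, 2 * r - δ ≤ dist u v) :
    diam s = 2 * r := by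
  obtain ⟨u, hu, -⟩ := h 1 one_pos
  have hr : 0 ≤ r := dist_nonneg.trans (mem_closedBall.1 (hs hu))
  refine le_antisymm ((diam_mono hs isBounded_closedBall).trans (diam_closedBall hr))
    (le_of_forall_pos_le_add fun δ hδ => ?_)
  obtain ⟨u, hu, v, hv, huv⟩ := h δ hδ
  linarith [dist_le_diam_of_mem (isBounded_closedBall.subset hs) hu hv]

/-- If `‖Id - P‖ = 2` for every norm-one rank-one projection `P` on a real
Banach space `X`, then `X` has the local diameter two property: every slice of
the unit ball has diameter `2`. -/
theorem stmt_5 {X : Type*} [NormedAddCommGroup X] [NormedSpace ℝ X] [CompleteSpace X]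
    (h : ∀ (f : X →L[ℝ] ℝ) (x : X), f x = 1 → ‖f.smulRight x‖ = 1 →
      ‖ContinuousLinearMap.id ℝ X - f.smulRight x‖ = 2) :
    ∀ g : X →L[ℝ] ℝ, ‖g‖ = 1 → ∀ ε > (0 : ℝ),
      Metric.diam {y : X | ‖y‖ ≤ 1 ∧ 1 - ε < g y} = 2 := by
  intro g hg ε hε
  refine (diam_eq_of_subset_closedBall (c := 0) (r := 1)
    (fun y hy => mem_closedBall_zero_iff.2 hy.1) fun δ hδ => ?_).trans (mul_one 2)
  obtain ⟨κ, hκ, hκε, hκ1⟩ : ∃ κ : ℝ, 0 < κ ∧ κ ≤ ε / 16 ∧ κ ≤ 1 / 6 :=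
    ⟨min ε 1 / 16, by positivity, by linarith [min_le_left ε 1], by linarith [min_le_right ε 1]⟩
  obtain ⟨F, x, hF, hx, hFx, hgx, hFg⟩ := bishop_phelps hg hκ hκ1
  obtain ⟨η, hη, hηδ, hηε⟩ : ∃ η : ℝ, 0 < η ∧ η ≤ δ / 2 ∧ η ≤ ε / 4 :=
    ⟨min (δ / 2) (ε / 4), by positivity, min_le_left _ _, min_le_right _ _⟩
  have hP : 2 - η < ‖ContinuousLinearMap.id ℝ X - F.smulRight x‖ := by
    rw [h F x hFx (by rw [ContinuousLinearMap.norm_smulRight_apply, hF, hx, one_mul])]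
    linarith
  obtain ⟨z, hz, hFz, hzx⟩ := exists_far_of_lt_norm_id_sub_smulRight hF.le hx.le hP
  have hgz : F z - 9 * κ ≤ g z := by
    have := (F - g).le_of_opNorm_le hFg z
    rw [sub_apply, Real.norm_eq_abs] at this
    nlinarith [abs_le.1 ((this.trans (mul_le_of_le_one_right (by positivity) hz)))]
  refine ⟨z, ⟨hz, ?_⟩, x, ⟨hx.le, ?_⟩, ?_⟩
  · linarith
  · linarith
  · rw [dist_eq_norm]; linarith
end

section
/- Let (Ω, Σ, μ) be a measure space with an atom A. Then L¹(μ) fails the local diameter two property: for every ε > 0, the slice S = {f ∈ B_{L¹(μ)} : ∫_A f dμ > 1 − ε} of B_{L¹(μ)} determined by the norm-one functional x* = χ_A ∈ L∞(μ) satisfies diam S ≤ 3ε, so some slice of B_{L¹(μ)} has diameter < 2. -/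
open MeasureTheory

/-- `A` is an atom for the measure `μ`. -/
def IsMeasureAtom {Ω : Type*} [MeasurableSpace Ω] (μ : Measure Ω) (A : Set Ω) : Prop :=
  MeasurableSet A ∧ 0 < μ A ∧ μ A < ⊤ ∧
    ∀ B : Set Ω, MeasurableSet B → B ⊆ A → μ B = 0 ∨ μ B = μ A

/-- Any a.e. strongly measurable real function is a.e. constant on an atom. -/
theorem atom_ae_const {Ω : Type*} [MeasurableSpace Ω] (μ : Measure Ω)
    (A : Set Ω) (hAm : MeasurableSet A) (hAfin : μ A < ⊤)
    (hatom : ∀ B : Set Ω, MeasurableSet B → B ⊆ A → μ B = 0 ∨ μ B = μ A)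
    (h : Ω → ℝ) (hm : AEStronglyMeasurable h (μ.restrict A)) :
    ∃ c : ℝ, h =ᵐ[μ.restrict A] fun _ => c := by
  have herg : Ergodic id (μ.restrict A) := by
    refine ⟨MeasurePreserving.id _, ⟨fun s hs _ => ?_⟩⟩
    rw [Filter.eventuallyConst_set']
    rcases hatom (s ∩ A) (hs.inter hAm) Set.inter_subset_right with h0 | hfull
    · left
      rw [ae_eq_empty, Measure.restrict_apply hs]
      exact h0
    · right
      rw [ae_eq_univ, Measure.restrict_apply hs.compl]
      have hsplit : μ (A ∩ s) + μ (A \ s) = μ A := measure_inter_add_diff A hs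
      rw [Set.inter_comm] at hfull
      rw [hfull] at hsplit
      have := (ENNReal.add_right_inj hAfin.ne).mp (hsplit.trans (add_zero _).symm)
      rwa [Set.diff_eq, Set.inter_comm] at this
  obtain ⟨c, hc⟩ := herg.ae_eq_const_of_ae_eq_comp_ae hm (by simp)
  exact ⟨c, hc⟩

/-- If `μ` has an atom `A`, then `L¹(μ)` fails the local diameter two property:
any two elements of the slice of the unit ball determined by the norm-one
functional `χ_A` (i.e. `f ↦ ∫_A f dμ`) and `ε` are at distance at most `3ε`. -/
theorem stmt_8 {Ω : Type*} [MeasurableSpace Ω] (μ : Measure Ω)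
    (A : Set Ω) (hA : IsMeasureAtom μ A)
    (ε : ℝ) (hε : 0 < ε)
    (f g : Lp ℝ 1 μ) (hf1 : ‖f‖ ≤ 1) (hg1 : ‖g‖ ≤ 1)
    (hfS : 1 - ε < ∫ x in A, (f : Ω → ℝ) x ∂μ)
    (hgS : 1 - ε < ∫ x in A, (g : Ω → ℝ) x ∂μ) :
    ‖f - g‖ ≤ 3 * ε := by
  obtain ⟨hAm, hA0, hAfin, hatom⟩ := hA
  set F : Ω → ℝ := (f : Ω → ℝ)
  set G : Ω → ℝ := (g : Ω → ℝ)
  have hFi : Integrable F μ := L1.integrable_coeFn f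
  have hGi : Integrable G μ := L1.integrable_coeFn g
  -- constants on the atom
  obtain ⟨c, hc⟩ := atom_ae_const μ A hAm hAfin hatom F (hFi.aestronglyMeasurable.restrict)
  obtain ⟨d, hd⟩ := atom_ae_const μ A hAm hAfin hatom G (hGi.aestronglyMeasurable.restrict)
  -- set integrals
  have hFint : ∫ x in A, F x ∂μ = c * (μ A).toReal := by
    rw [integral_congr_ae hc, setIntegral_const, smul_eq_mul, mul_comm]
    rfl
  have hGint : ∫ x in A, G x ∂μ = d * (μ A).toReal := by
    rw [integral_congr_ae hd, setIntegral_const, smul_eq_mul, mul_comm]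
    rfl
  -- ∫_A |F - G| = |∫_A F - ∫_A G|
  have hcd : ∫ x in A, |F x - G x| ∂μ = |∫ x in A, F x ∂μ - ∫ x in A, G x ∂μ| := by
    have : (fun x => |F x - G x|) =ᵐ[μ.restrict A] fun _ => |c - d| := by
      filter_upwards [hc, hd] with x h1 h2
      rw [h1, h2]
    rw [integral_congr_ae this, setIntegral_const, smul_eq_mul, hFint, hGint, ← sub_mul,
      abs_mul, abs_of_nonneg (ENNReal.toReal_nonneg : (0:ℝ) ≤ (μ A).toReal), mul_comm]
    rfl
  -- norms as integrals
  have hnormf : ‖f‖ = ∫ x, |F x| ∂μ := by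
    rw [L1.norm_eq_integral_norm]
    simp [Real.norm_eq_abs, F]
  have hnormg : ‖g‖ = ∫ x, |G x| ∂μ := by
    rw [L1.norm_eq_integral_norm]
    simp [Real.norm_eq_abs, G]
  -- tail bounds
  have habsF : Integrable (fun x => |F x|) μ := hFi.abs
  have habsG : Integrable (fun x => |G x|) μ := hGi.abs
  have hsplitF : ∫ x in A, |F x| ∂μ + ∫ x in Aᶜ, |F x| ∂μ = ∫ x, |F x| ∂μ :=
    integral_add_compl hAm habsF
  have hsplitG : ∫ x in A, |G x| ∂μ + ∫ x in Aᶜ, |G x| ∂μ = ∫ x, |G x| ∂μ :=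
    integral_add_compl hAm habsG
  have hFA_le : ∫ x in A, F x ∂μ ≤ ∫ x in A, |F x| ∂μ :=
    integral_mono_ae hFi.integrableOn habsF.integrableOn (Filter.Eventually.of_forall
      fun x => le_abs_self _)
  have hGA_le : ∫ x in A, G x ∂μ ≤ ∫ x in A, |G x| ∂μ :=
    integral_mono_ae hGi.integrableOn habsG.integrableOn (Filter.Eventually.of_forall
      fun x => le_abs_self _)
  have htailF : ∫ x in Aᶜ, |F x| ∂μ < ε := by
    have h1 : ∫ x in Aᶜ, |F x| ∂μ ≤ 1 - ∫ x in A, |F x| ∂μ := by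
      have : ∫ x, |F x| ∂μ ≤ 1 := hnormf ▸ hf1
      linarith [hsplitF]
    linarith [hFA_le]
  have htailG : ∫ x in Aᶜ, |G x| ∂μ < ε := by
    have h1 : ∫ x in Aᶜ, |G x| ∂μ ≤ 1 - ∫ x in A, |G x| ∂μ := by
      have : ∫ x, |G x| ∂μ ≤ 1 := hnormg ▸ hg1
      linarith [hsplitG]
    linarith [hGA_le]
  -- upper bounds on set integrals
  have hFA_ub : ∫ x in A, F x ∂μ ≤ 1 := by
    have h2 : ∫ x in A, |F x| ∂μ ≤ ∫ x, |F x| ∂μ :=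
      setIntegral_le_integral habsF (Filter.Eventually.of_forall fun x => abs_nonneg _)
    have : ∫ x, |F x| ∂μ ≤ 1 := hnormf ▸ hf1
    linarith
  have hGA_ub : ∫ x in A, G x ∂μ ≤ 1 := by
    have h2 : ∫ x in A, |G x| ∂μ ≤ ∫ x, |G x| ∂μ :=
      setIntegral_le_integral habsG (Filter.Eventually.of_forall fun x => abs_nonneg _)
    have : ∫ x, |G x| ∂μ ≤ 1 := hnormg ▸ hg1
    linarith
  -- assemble
  have hFGi : Integrable (fun x => |F x - G x|) μ := (hFi.sub hGi).abs
  have hnorm : ‖f - g‖ = ∫ x, |F x - G x| ∂μ := by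
    rw [L1.norm_eq_integral_norm]
    refine integral_congr_ae ?_
    filter_upwards [Lp.coeFn_sub f g] with x hx
    rw [hx]
    simp [Real.norm_eq_abs, F, G]
  have hsplit : ∫ x in A, |F x - G x| ∂μ + ∫ x in Aᶜ, |F x - G x| ∂μ
      = ∫ x, |F x - G x| ∂μ := integral_add_compl hAm hFGi
  have htri : ∫ x in Aᶜ, |F x - G x| ∂μ ≤ ∫ x in Aᶜ, |F x| ∂μ + ∫ x in Aᶜ, |G x| ∂μ := by
    rw [← integral_add habsF.integrableOn habsG.integrableOn]
    exact integral_mono_ae hFGi.integrableOn (habsF.integrableOn.add habsG.integrableOn)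
      (Filter.Eventually.of_forall fun x => abs_sub _ _)
  have hA_close : |∫ x in A, F x ∂μ - ∫ x in A, G x ∂μ| ≤ ε := by
    rw [abs_le]; constructor <;> linarith
  rw [hnorm, ← hsplit, hcd]
  linarith
end

section
/- Let K be a compact Hausdorff topological space and f ∈ C(K) with ‖f‖∞ = 1. If there exists a limit point (non-isolated point) x₀ of K with |f(x₀)| = 1, then f is a Daugavet point: for every g ∈ B_{C(K)}, every ε > 0, and every m ∈ ℕ there exist g₁, …, g_m ∈ B_{C(K)} with ‖f − g_i‖∞ ≥ 2 − ε for each i and ‖g − (1/m)Σ g_i‖∞ ≤ 2/m. Consequently B_{C(K)} = cl conv Δ_ε(f) for all ε > 0. -/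
open Set Metric Topology Function

/-!
Near the non-isolated point `x₀` there are `m` distinct points `xᵢ` at which `f` is
`ε`-close to `c = f x₀`; separate them by disjoint open sets and take Urysohn bumps `ηᵢ`
with `ηᵢ xᵢ = 1` supported there. Then `gᵢ = (1 - ηᵢ) g - ηᵢ c` lies in the unit ball and
equals `-c` at `xᵢ`, so `‖f - gᵢ‖ ≥ |f xᵢ + c| ≥ 2 - ε`, while
`g - (1/m) ∑ gᵢ = (1/m) (∑ ηᵢ) (g + c)` has norm at most `2/m` since `0 ≤ ∑ ηᵢ ≤ 1`.
So averages of points of `Δ_ε(f)` approximate every point of the ball.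
-/

lemma sum_le_one_of_support_subset_pairwiseDisjoint {α ι : Type*} [Fintype ι]
    {W : ι → Set α} (hW : Pairwise (Disjoint on W)) {η : ι → α → ℝ}
    (hηW : ∀ i, support (η i) ⊆ W i) (hη : ∀ i y, η i y ≤ 1) (y : α) : ∑ i, η i y ≤ 1 := by
  by_cases hy : ∃ i, y ∈ W i
  · obtain ⟨i, hi⟩ := hy
    have hvanish (j : ι) (hji : j ≠ i) : η j y = 0 :=
      support_subset_iff'.1 (hηW j) y fun hj => (hW hji).le_bot ⟨hj, hi⟩
    rw [Finset.sum_eq_single i (fun j _ => hvanish j) (by simp)]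
    exact hη i y
  · push Not at hy
    simp [Finset.sum_eq_zero fun i _ => support_subset_iff'.1 (hηW i) y (hy i)]

lemma IsOpen.exists_bumps_of_infinite {K : Type*} [TopologicalSpace K] [T2Space K]
    [NormalSpace K] {V : Set K} (hVo : IsOpen V) (hV : V.Infinite) (m : ℕ) :
    ∃ (x : Fin m → K) (η : Fin m → C(K, ℝ)), (∀ i, x i ∈ V) ∧ (∀ i, η i (x i) = 1) ∧
      (∀ i y, η i y ∈ Icc (0 : ℝ) 1) ∧ ∀ y, ∑ i, η i y ≤ 1 := by
  set x : Fin m → K := fun i => hV.natEmbedding _ i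
  have hxV : ∀ i, x i ∈ V := fun i => (hV.natEmbedding _ i).2
  have hx_inj : Injective x :=
    Subtype.val_injective.comp ((hV.natEmbedding _).injective.comp Fin.val_injective)
  obtain ⟨U, hU, hU_disj⟩ := (finite_range x).t2_separation
  set W : Fin m → Set K := fun i => U (x i) ∩ V
  have hW_disj : Pairwise (Disjoint on W) := fun i j hij =>
    (hU_disj (mem_range_self i) (mem_range_self j) (hx_inj.ne hij)).mono
      inter_subset_left inter_subset_left
  have hbump (i : Fin m) : ∃ η : C(K, ℝ),
      EqOn η 0 (W i)ᶜ ∧ EqOn η 1 {x i} ∧ ∀ y, η y ∈ Icc (0 : ℝ) 1 :=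
    exists_continuous_zero_one_of_isClosed ((hU _).2.inter hVo).isClosed_compl
      isClosed_singleton (disjoint_singleton_right.2 (not_not.2 ⟨(hU _).1, hxV i⟩))
  choose η hηW hηx hη01 using hbump
  exact ⟨x, η, hxV, fun i => hηx i rfl, hη01,
    sum_le_one_of_support_subset_pairwiseDisjoint hW_disj
      (fun i => support_subset_iff'.2 (hηW i)) fun i y => (hη01 i y).2⟩

lemma abs_sub_mul_add_le_one {a c t : ℝ} (ha : |a| ≤ 1) (hc : |c| ≤ 1)
    (ht : t ∈ Icc (0 : ℝ) 1) : |a - t * (a + c)| ≤ 1 := by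
  rw [abs_le] at *
  obtain ⟨ht0, ht1⟩ := ht
  constructor <;> nlinarith

lemma two_sub_le_abs_add {a c ε : ℝ} (hc : |c| = 1) (ha : |a - c| < ε) : 2 - ε ≤ |a + c| := by
  calc 2 - ε ≤ |2 * c| - |c - a| := by rw [abs_mul, abs_two, hc, abs_sub_comm]; linarith
    _ ≤ |2 * c - (c - a)| := abs_sub_abs_le_abs_sub _ _
    _ = |a + c| := by congr 1; ring

lemma sub_inv_smul_sum_sub_mul {A : Type*} [Ring A] [Algebra ℝ A] {m : ℕ} (hm : m ≠ 0)
    (g h : A) (η : Fin m → A) :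
    g - (m : ℝ)⁻¹ • ∑ i, (g - η i * h) = (m : ℝ)⁻¹ • ((∑ i, η i) * h) := by
  rw [Finset.sum_sub_distrib, Finset.sum_const, Finset.card_univ, Fintype.card_fin,
    Finset.sum_mul, smul_sub, ← Nat.cast_smul_eq_nsmul ℝ, smul_smul,
    inv_mul_cancel₀ (Nat.cast_ne_zero.2 hm), one_smul, sub_sub_cancel]

theorem eq_closure_convexHull_of_forall_exists_average {E : Type*} [SeminormedAddCommGroup E]
    [NormedSpace ℝ E] {B S : Set E} (hB : IsClosed B) (hB_conv : Convex ℝ B) (hSB : S ⊆ B)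
    {C : ℝ} (h : ∀ g ∈ B, ∀ m : ℕ, 0 < m →
      ∃ G : Fin m → E, (∀ i, G i ∈ S) ∧ ‖g - (m : ℝ)⁻¹ • ∑ i, G i‖ ≤ C / m) :
    B = closure (convexHull ℝ S) := by
  refine Subset.antisymm (fun g hg => Metric.mem_closure_iff.2 fun δ hδ => ?_)
    (closure_minimal (convexHull_min hSB hB_conv) hB)
  obtain ⟨n, hn⟩ := exists_nat_gt (C / δ)
  have hm : (0 : ℝ) < (n + 1 : ℕ) := by positivity
  obtain ⟨G, hGS, hG⟩ := h g hg (n + 1) n.succ_pos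
  refine ⟨(((n + 1 : ℕ) : ℝ))⁻¹ • ∑ i, G i, ?_, ?_⟩
  · refine mem_convexHull_of_exists_fintype (fun _ => ((n + 1 : ℕ) : ℝ)⁻¹) G
      (fun _ => by positivity) ?_ hGS Finset.smul_sum.symm
    rw [Finset.sum_const, Finset.card_univ, Fintype.card_fin, nsmul_eq_mul,
      mul_inv_cancel₀ hm.ne']
  · rw [dist_eq_norm]
    refine hG.trans_lt ((div_lt_iff₀ hm).2 ?_)
    rw [div_lt_iff₀ hδ] at hn
    push_cast
    nlinarith

theorem ContinuousMap.exists_far_family_approximating_average {K : Type*} [TopologicalSpace K]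
    [CompactSpace K] [T2Space K] {f : C(K, ℝ)} {x₀ : K} [(𝓝[≠] x₀).NeBot] (hfx : |f x₀| = 1)
    {g : C(K, ℝ)} (hg : ‖g‖ ≤ 1) {ε : ℝ} (hε : 0 < ε) {m : ℕ} (hm : 0 < m) :
    ∃ G : Fin m → C(K, ℝ), (∀ i, ‖G i‖ ≤ 1 ∧ 2 - ε ≤ ‖f - G i‖) ∧
      ‖g - (m : ℝ)⁻¹ • ∑ i, G i‖ ≤ 2 / m := by
  set c := f x₀
  have hV : f ⁻¹' ball c ε ∈ 𝓝 x₀ :=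
    f.continuous.continuousAt.preimage_mem_nhds (ball_mem_nhds c hε)
  obtain ⟨x, η, hxV, hηx, hη01, hηsum⟩ :=
    (isOpen_ball.preimage f.continuous).exists_bumps_of_infinite
      (infinite_of_mem_nhds x₀ hV) m
  have hgy (y : K) : |g y| ≤ 1 := (g.norm_coe_le_norm y).trans hg
  set h := g + ContinuousMap.const K c
  refine ⟨fun i => g - η i * h, fun i => ⟨?_, ?_⟩, ?_⟩
  · refine (ContinuousMap.norm_le _ zero_le_one).2 fun y => ?_
    simpa [h] using abs_sub_mul_add_le_one (hgy y) hfx.le (hη01 i y)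
  · calc 2 - ε ≤ |f (x i) + c| := two_sub_le_abs_add hfx (hxV i)
      _ = |(f - (g - η i * h)) (x i)| := by simp [h, hηx i]
      _ ≤ ‖f - (g - η i * h)‖ := (f - (g - η i * h)).norm_coe_le_norm (x i)
  · have hsum : ‖∑ i, η i‖ ≤ 1 := (ContinuousMap.norm_le _ zero_le_one).2 fun y => by
      rw [ContinuousMap.coe_sum, Finset.sum_apply, Real.norm_eq_abs,
        abs_of_nonneg (Finset.sum_nonneg fun i _ => (hη01 i y).1)]
      exact hηsum y
    have hh : ‖h‖ ≤ 2 := (ContinuousMap.norm_le _ zero_le_two).2 fun y =>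
      calc |g y + c| ≤ |g y| + |c| := abs_add_le _ _
        _ ≤ 2 := by linarith [hgy y]
    rw [sub_inv_smul_sum_sub_mul hm.ne']
    calc ‖(m : ℝ)⁻¹ • ((∑ i, η i) * h)‖ ≤ (m : ℝ)⁻¹ * (‖∑ i, η i‖ * ‖h‖) := by
          rw [norm_smul, Real.norm_of_nonneg (by positivity)]
          gcongr
          exact norm_mul_le _ _
      _ ≤ (m : ℝ)⁻¹ * (1 * 2) := by gcongr
      _ = 2 / m := by ring

theorem stmt_9_general {K : Type*} [TopologicalSpace K] [CompactSpace K] [T2Space K]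
    (f : C(K, ℝ))
    (x₀ : K) (hlim : (nhdsWithin x₀ {x₀}ᶜ).NeBot) (hfx : |f x₀| = 1) :
    (∀ g : C(K, ℝ), ‖g‖ ≤ 1 → ∀ ε > (0 : ℝ), ∀ m : ℕ, 0 < m →
      ∃ G : Fin m → C(K, ℝ),
        (∀ i, ‖G i‖ ≤ 1 ∧ 2 - ε ≤ ‖f - G i‖) ∧
        ‖g - (m : ℝ)⁻¹ • ∑ i, G i‖ ≤ 2 / m) ∧
    (∀ ε > (0 : ℝ),
      Metric.closedBall (0 : C(K, ℝ)) 1 =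
        closure (convexHull ℝ {h : C(K, ℝ) | ‖h‖ ≤ 1 ∧ 2 - ε ≤ ‖f - h‖})) := by
  have := hlim
  refine ⟨fun _ hg _ hε _ hm => ContinuousMap.exists_far_family_approximating_average hfx hg hε hm,
    fun ε hε => ?_⟩
  exact eq_closure_convexHull_of_forall_exists_average isClosed_closedBall (convex_closedBall 0 1)
    (fun h hh => mem_closedBall_zero_iff.2 hh.1) fun g hg m hm =>
      ContinuousMap.exists_far_family_approximating_average hfx (mem_closedBall_zero_iff.1 hg) hε hm

/-- If `f ∈ C(K)` (`K` compact Hausdorff) has norm one and `|f(x₀)| = 1` at a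
limit (non-isolated) point `x₀` of `K`, then `f` is a Daugavet point: for every
`g` in the unit ball, `ε > 0` and `m ∈ ℕ` there are `g₁, …, g_m` in the unit
ball with `‖f - gᵢ‖ ≥ 2 - ε` and `‖g - (1/m)∑ gᵢ‖ ≤ 2/m`; consequently
`B_{C(K)} = cl conv Δ_ε(f)` for all `ε > 0`. -/
theorem stmt_9 {K : Type*} [TopologicalSpace K] [CompactSpace K] [T2Space K]
    (f : C(K, ℝ)) (hf : ‖f‖ = 1)
    (x₀ : K) (hlim : (nhdsWithin x₀ {x₀}ᶜ).NeBot) (hfx : |f x₀| = 1) :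
    (∀ g : C(K, ℝ), ‖g‖ ≤ 1 → ∀ ε > (0 : ℝ), ∀ m : ℕ, 0 < m →
      ∃ G : Fin m → C(K, ℝ),
        (∀ i, ‖G i‖ ≤ 1 ∧ 2 - ε ≤ ‖f - G i‖) ∧
        ‖g - (m : ℝ)⁻¹ • ∑ i, G i‖ ≤ 2 / m) ∧
    (∀ ε > (0 : ℝ),
      Metric.closedBall (0 : C(K, ℝ)) 1 =
        closure (convexHull ℝ {h : C(K, ℝ) | ‖h‖ ≤ 1 ∧ 2 - ε ≤ ‖f - h‖})) :=
  stmt_9_general f x₀ hlim hfx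
end

section
/- Let K be a compact Hausdorff space and f ∈ C(K) with ‖f‖∞ = 1 such that |f(x)| < 1 for every limit point x of K. Then f is not a Δ-point. In fact, the set H = {x ∈ K : |f(x)| = 1} is a finite nonempty set of isolated points, and the norm-one rank-one projection P = μ ⊗ f, where μ = (1/|H|) Σ_{h∈H} sign(f(h))·δ_h, satisfies ‖Id − P‖ ≤ 2 − min{δ, 2/|H|} < 2 where δ = 1 − max_{x ∈ K∖H} |f(x)| > 0. -/
/-!
Every point where `|f| = 1` is isolated, so the peak set `H` of `f` is compact and discrete,
hence finite; it is nonempty because the sup norm is attained, and `|f| ≤ s < 1` off `H`.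
The signed average `μ g = |H|⁻¹ ∑_{h ∈ H} sign (f h) g h` satisfies `μ f = 1`, `‖μ‖ ≤ 1` and
`g x - μ g f x = |H|⁻¹ ∑_{h ∈ H} (g x - sign (f h) g h f x)`, where every summand is at most
`(1 + |f x|) ‖g‖` and the summand `h = x` vanishes when `x ∈ H`; this gives
`‖Id - μ ⊗ f‖ ≤ 2 - min (1 - s) (2 / |H|)`. Finally, if `c = ‖Id - μ ⊗ f‖ < 2`, every `g` in the
unit ball with `‖f - g‖ ≥ 2 - ε` lies in the closed half-space `μ ≤ c - 1 + ε`, which misses `f`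
as soon as `ε < 2 - c`.
-/

open Set Topology

theorem Real.sign_mul_self_eq_abs_s10 (r : ℝ) : Real.sign r * r = |r| := by
  rcases lt_trichotomy r 0 with hr | rfl | hr
  · rw [Real.sign_of_neg hr, abs_of_neg hr, neg_one_mul]
  · simp
  · rw [Real.sign_of_pos hr, abs_of_pos hr, one_mul]

theorem Real.abs_sign_le_one (r : ℝ) : |Real.sign r| ≤ 1 := by
  rcases Real.sign_apply_eq r with h | h | h <;> simp [h]

theorem IsCompact.finite_of_forall_isOpen_singleton {X : Type*} [TopologicalSpace X]
    {s : Set X} (hs : IsCompact s) (h : ∀ x ∈ s, IsOpen ({x} : Set X)) : s.Finite :=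
  hs.finite <| isDiscrete_iff_forall_mem_exists_isOpen.2 fun x hx =>
    ⟨{x}, h x hx, singleton_inter_of_mem hx⟩

/- `0 < a` handles `s = ∅`, where `sSup ∅ = 0`. -/
theorem IsCompact.sSup_image_lt {X : Type*} [TopologicalSpace X] {s : Set X}
    (hs : IsCompact s) {φ : X → ℝ} (hφ : ContinuousOn φ s) {a : ℝ} (ha : 0 < a)
    (h : ∀ x ∈ s, φ x < a) : sSup (φ '' s) < a := by
  rcases s.eq_empty_or_nonempty with rfl | hne
  · rwa [image_empty, Real.sSup_empty]
  · exact (hs.sSup_lt_iff_of_continuous hne hφ a).2 h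

theorem notMem_closure_convexHull_of_lt_two_sub_norm_id_sub_smulRight
    {E : Type*} [NormedAddCommGroup E] [NormedSpace ℝ E] {f : E} (hf : ‖f‖ ≤ 1)
    {μ : StrongDual ℝ E} (hμ : ‖μ‖ ≤ 1) (hμf : μ f = 1) {ε : ℝ}
    (hε : ε < 2 - ‖ContinuousLinearMap.id ℝ E - μ.smulRight f‖) :
    f ∉ closure (convexHull ℝ {g : E | ‖g‖ ≤ 1 ∧ 2 - ε ≤ ‖f - g‖}) := by
  set c := ‖ContinuousLinearMap.id ℝ E - μ.smulRight f‖
  have hsub : {g : E | ‖g‖ ≤ 1 ∧ 2 - ε ≤ ‖f - g‖} ⊆ {g | μ g ≤ c - 1 + ε} := by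
    rintro g ⟨hg, hfg⟩
    have hμg : μ g ≤ 1 :=
      (le_abs_self _).trans <| (μ.le_opNorm g).trans (mul_le_one₀ hμ (norm_nonneg _) hg)
    have hdecomp : f - g = (1 - μ g) • f - (ContinuousLinearMap.id ℝ E - μ.smulRight f) g := by
      simp only [sub_apply, ContinuousLinearMap.id_apply,
        ContinuousLinearMap.smulRight_apply]
      module
    have : ‖f - g‖ ≤ (1 - μ g) + c :=
      calc ‖f - g‖ ≤ ‖(1 - μ g) • f‖ + ‖(ContinuousLinearMap.id ℝ E - μ.smulRight f) g‖ :=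
            hdecomp ▸ norm_sub_le _ _
        _ ≤ (1 - μ g) * 1 + c * 1 := by
            rw [norm_smul, Real.norm_of_nonneg (sub_nonneg.2 hμg)]
            gcongr
            exact (ContinuousLinearMap.le_opNorm _ _).trans (by gcongr)
        _ = (1 - μ g) + c := by ring
    show μ g ≤ c - 1 + ε
    linarith
  intro hmem
  have hhalf := closure_minimal
    (convexHull_min hsub (convex_halfSpace_le μ.toLinearMap.isLinear _))
    (isClosed_le μ.continuous continuous_const) hmem
  change μ f ≤ c - 1 + ε at hhalf
  rw [hμf] at hhalf
  linarith

namespace ContinuousMap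

variable {K : Type*} [TopologicalSpace K]

noncomputable def signedAverage (f : C(K, ℝ)) (T : Finset K) : StrongDual ℝ C(K, ℝ) :=
  (T.card : ℝ)⁻¹ • ∑ h ∈ T, Real.sign (f h) • evalCLM ℝ h

theorem signedAverage_apply (f g : C(K, ℝ)) (T : Finset K) :
    signedAverage f T g = (T.card : ℝ)⁻¹ * ∑ h ∈ T, Real.sign (f h) * g h := by
  simp [signedAverage]

variable {f g : C(K, ℝ)} {T : Finset K}

theorem signedAverage_self (hne : T.Nonempty) (hT : ∀ h ∈ T, |f h| = 1) :
    signedAverage f T f = 1 := by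
  rw [signedAverage_apply, Finset.sum_congr rfl fun h hh =>
    (Real.sign_mul_self_eq_abs_s10 _).trans (hT h hh)]
  simp [hne.card_pos.ne']

theorem sub_signedAverage_mul_eq (hne : T.Nonempty) (g : C(K, ℝ)) (x : K) :
    g x - signedAverage f T g * f x =
      (T.card : ℝ)⁻¹ * ∑ h ∈ T, (g x - Real.sign (f h) * g h * f x) := by
  have hcard : (T.card : ℝ) ≠ 0 := Nat.cast_ne_zero.2 hne.card_pos.ne'
  rw [signedAverage_apply, Finset.sum_sub_distrib, Finset.sum_const, nsmul_eq_mul,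
    ← Finset.sum_mul]
  field_simp

theorem isOpen_singleton_of_abs_eq_one (hlim : ∀ x, (𝓝[≠] x).NeBot → |f x| < 1) {x : K}
    (hx : |f x| = 1) : IsOpen ({x} : Set K) := by
  rw [isOpen_singleton_iff_punctured_nhds, ← Filter.not_neBot]
  exact fun hne => (hlim x hne).ne hx

theorem isOpen_setOf_abs_eq_one (hlim : ∀ x, (𝓝[≠] x).NeBot → |f x| < 1) :
    IsOpen {x | |f x| = 1} :=
  isOpen_iff_forall_mem_open.2 fun x hx =>
    ⟨{x}, singleton_subset_iff.2 hx, isOpen_singleton_of_abs_eq_one hlim hx, rfl⟩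

variable [CompactSpace K]

theorem exists_norm_apply_eq_norm [Nonempty K] {E : Type*} [SeminormedAddCommGroup E]
    (f : C(K, E)) : ∃ x, ‖f x‖ = ‖f‖ := by
  obtain ⟨x, -, hx⟩ := isCompact_univ.exists_isMaxOn univ_nonempty
    (continuous_norm.comp f.continuous).continuousOn
  exact ⟨x, le_antisymm (f.norm_coe_le_norm x)
    ((f.norm_le (norm_nonneg _)).2 fun y => hx (mem_univ y))⟩

theorem abs_sign_mul_apply_le (f g : C(K, ℝ)) (h : K) : |Real.sign (f h) * g h| ≤ ‖g‖ := by
  rw [abs_mul]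
  exact (mul_le_mul (Real.abs_sign_le_one _) (g.norm_coe_le_norm h) (abs_nonneg _)
    zero_le_one).trans_eq (one_mul _)

theorem norm_signedAverage_le : ‖signedAverage f T‖ ≤ 1 := by
  refine ContinuousLinearMap.opNorm_le_bound _ zero_le_one fun g => ?_
  rw [one_mul, Real.norm_eq_abs, signedAverage_apply, abs_mul, abs_inv, Nat.abs_cast]
  calc (T.card : ℝ)⁻¹ * |∑ h ∈ T, Real.sign (f h) * g h|
      ≤ (T.card : ℝ)⁻¹ * (T.card * ‖g‖) := by
        gcongr
        exact (Finset.abs_sum_le_sum_abs _ _).trans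
          (Finset.sum_le_card_nsmul _ _ _ fun h _ => abs_sign_mul_apply_le f g h) |>.trans_eq
          (nsmul_eq_mul _ _)
    _ = ((T.card : ℝ)⁻¹ * T.card) * ‖g‖ := by ring
    _ ≤ 1 * ‖g‖ := by gcongr; exact inv_mul_le_one_of_le₀ le_rfl (Nat.cast_nonneg _)
    _ = ‖g‖ := one_mul _

theorem abs_sub_sign_mul_le (g : C(K, ℝ)) (x h : K) :
    |g x - Real.sign (f h) * g h * f x| ≤ (1 + |f x|) * ‖g‖ :=
  calc |g x - Real.sign (f h) * g h * f x|
      ≤ |g x| + |Real.sign (f h) * g h| * |f x| := (abs_sub _ _).trans_eq (by rw [abs_mul])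
    _ ≤ ‖g‖ + ‖g‖ * |f x| := by
        gcongr
        · exact g.norm_coe_le_norm x
        · exact abs_sign_mul_apply_le f g h
    _ = (1 + |f x|) * ‖g‖ := by ring

theorem abs_sub_signedAverage_mul_le (hne : T.Nonempty) (g : C(K, ℝ)) (x : K) :
    |g x - signedAverage f T g * f x| ≤ (1 + |f x|) * ‖g‖ := by
  have hcard : (T.card : ℝ) ≠ 0 := Nat.cast_ne_zero.2 hne.card_pos.ne'
  rw [sub_signedAverage_mul_eq hne, abs_mul, abs_inv, Nat.abs_cast]
  calc (T.card : ℝ)⁻¹ * |∑ h ∈ T, (g x - Real.sign (f h) * g h * f x)|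
      ≤ (T.card : ℝ)⁻¹ * (T.card * ((1 + |f x|) * ‖g‖)) := by
        gcongr
        exact (Finset.abs_sum_le_sum_abs _ _).trans
          (Finset.sum_le_card_nsmul _ _ _ fun h _ => abs_sub_sign_mul_le g x h) |>.trans_eq
          (nsmul_eq_mul _ _)
    _ = (1 + |f x|) * ‖g‖ := by field_simp

theorem abs_sub_signedAverage_mul_le_of_mem (hT : ∀ h ∈ T, |f h| = 1) (g : C(K, ℝ))
    {x : K} (hx : x ∈ T) :
    |g x - signedAverage f T g * f x| ≤ (2 - 2 / T.card) * ‖g‖ := by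
  classical
  have hcard : (T.card : ℝ) ≠ 0 := Nat.cast_ne_zero.2 (Finset.card_ne_zero_of_mem hx)
  have hdiag : g x - Real.sign (f x) * g x * f x = 0 := by
    rw [mul_right_comm, Real.sign_mul_self_eq_abs_s10, hT x hx, one_mul, sub_self]
  rw [sub_signedAverage_mul_eq ⟨x, hx⟩, ← Finset.add_sum_erase T _ hx, hdiag, zero_add,
    abs_mul, abs_inv, Nat.abs_cast]
  calc (T.card : ℝ)⁻¹ * |∑ h ∈ T.erase x, (g x - Real.sign (f h) * g h * f x)|
      ≤ (T.card : ℝ)⁻¹ * ((T.card - 1) * ((1 + |f x|) * ‖g‖)) := by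
        gcongr
        rw [← Finset.cast_card_erase_of_mem hx, ← nsmul_eq_mul]
        exact (Finset.abs_sum_le_sum_abs _ _).trans
          (Finset.sum_le_card_nsmul _ _ _ fun h _ => abs_sub_sign_mul_le g x h)
    _ = (2 - 2 / T.card) * ‖g‖ := by rw [hT x hx]; field_simp; ring

theorem abs_sub_signedAverage_mul_le_two_sub_min (hne : T.Nonempty) (hT : ∀ h ∈ T, |f h| = 1)
    {s : ℝ} (hs : ∀ x ∉ T, |f x| ≤ s) (g : C(K, ℝ)) (x : K) :
    |g x - signedAverage f T g * f x| ≤ (2 - min (1 - s) (2 / T.card)) * ‖g‖ := by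
  by_cases hx : x ∈ T
  · exact (abs_sub_signedAverage_mul_le_of_mem hT g hx).trans <| by
      gcongr; exact min_le_right _ _
  · refine (abs_sub_signedAverage_mul_le hne g x).trans ?_
    have := hs x hx
    have := min_le_left (1 - s) (2 / T.card)
    gcongr
    linarith

theorem norm_id_sub_signedAverage_smulRight_le (hne : T.Nonempty) (hT : ∀ h ∈ T, |f h| = 1)
    {s : ℝ} (hs : ∀ x ∉ T, |f x| ≤ s) :
    ‖ContinuousLinearMap.id ℝ C(K, ℝ) - (signedAverage f T).smulRight f‖ ≤
      2 - min (1 - s) (2 / T.card) := by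
  have hmin : min (1 - s) (2 / T.card) ≤ 2 :=
    (min_le_right _ _).trans (div_le_self zero_le_two (Nat.one_le_cast.2 hne.card_pos))
  refine ContinuousLinearMap.opNorm_le_bound _ (by linarith) fun g =>
    (g - signedAverage f T g • f).norm_le (by nlinarith [norm_nonneg g]) |>.2 fun x => ?_
  simpa only [Real.norm_eq_abs, sub_apply, smul_apply, smul_eq_mul]
    using abs_sub_signedAverage_mul_le_two_sub_min hne hT hs g x

theorem abs_apply_le_sSup_image {A : Set K} {x : K} (hx : x ∈ A) :
    |f x| ≤ sSup ((fun x => |f x|) '' A) :=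
  le_csSup ⟨‖f‖, by rintro _ ⟨y, -, rfl⟩; exact f.norm_coe_le_norm y⟩ ⟨x, hx, rfl⟩

theorem exists_abs_apply_eq_one (hf : ‖f‖ = 1) : ∃ x, |f x| = 1 := by
  have : Nonempty K := by
    by_contra h
    rw [not_nonempty_iff] at h
    simp [Subsingleton.elim f 0] at hf
  obtain ⟨x, hx⟩ := f.exists_norm_apply_eq_norm
  exact ⟨x, hx.trans hf⟩

theorem finite_setOf_abs_eq_one (hlim : ∀ x, (𝓝[≠] x).NeBot → |f x| < 1) :
    {x | |f x| = 1}.Finite :=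
  (isClosed_eq (continuous_abs.comp f.continuous) continuous_const).isCompact
    |>.finite_of_forall_isOpen_singleton fun _ => isOpen_singleton_of_abs_eq_one hlim

theorem sSup_abs_image_compl_lt_one (hlim : ∀ x, (𝓝[≠] x).NeBot → |f x| < 1) (hf : ‖f‖ ≤ 1) :
    sSup ((fun x => |f x|) '' {x | |f x| = 1}ᶜ) < 1 :=
  (isOpen_setOf_abs_eq_one hlim).isClosed_compl.isCompact.sSup_image_lt
    (continuous_abs.comp f.continuous).continuousOn one_pos fun x hx =>
      (f.norm_coe_le_norm x |>.trans hf).lt_of_ne hx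

end ContinuousMap

open ContinuousMap

theorem stmt_10_general {K : Type*} [TopologicalSpace K] [CompactSpace K]
    (f : C(K, ℝ)) (hf : ‖f‖ = 1)
    (hlim : ∀ x : K, (nhdsWithin x {x}ᶜ).NeBot → |f x| < 1) :
    Set.Finite {x : K | |f x| = 1} ∧
    Set.Nonempty {x : K | |f x| = 1} ∧
    (∀ x ∈ {x : K | |f x| = 1}, IsOpen ({x} : Set K)) ∧
    (∀ hfin : Set.Finite {x : K | |f x| = 1},
      ∀ P : C(K, ℝ) →L[ℝ] C(K, ℝ),
        (∀ g : C(K, ℝ), P g =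
          ((hfin.toFinset.card : ℝ)⁻¹ *
            ∑ h ∈ hfin.toFinset, Real.sign (f h) * g h) • f) →
        ‖ContinuousLinearMap.id ℝ (C(K, ℝ)) - P‖ ≤
          2 - min (1 - sSup ((fun x => |f x|) '' {x : K | |f x| = 1}ᶜ))
                (2 / (hfin.toFinset.card : ℝ)) ∧
        ‖ContinuousLinearMap.id ℝ (C(K, ℝ)) - P‖ < 2) ∧
    ¬ (∀ ε > (0 : ℝ),
        f ∈ closure (convexHull ℝ {g : C(K, ℝ) | ‖g‖ ≤ 1 ∧ 2 - ε ≤ ‖f - g‖})) := by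
  have hfin := finite_setOf_abs_eq_one hlim
  have hne : Set.Nonempty {x | |f x| = 1} := exists_abs_apply_eq_one hf
  have hbound (hfin' : Set.Finite {x | |f x| = 1}) :
      ‖ContinuousLinearMap.id ℝ C(K, ℝ) - (signedAverage f hfin'.toFinset).smulRight f‖ ≤
        2 - min (1 - sSup ((fun x => |f x|) '' {x | |f x| = 1}ᶜ)) (2 / hfin'.toFinset.card) ∧
      ‖ContinuousLinearMap.id ℝ C(K, ℝ) - (signedAverage f hfin'.toFinset).smulRight f‖ < 2 := by
    have hneT := hfin'.toFinset_nonempty.2 hne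
    have hle := norm_id_sub_signedAverage_smulRight_le hneT (fun h hh => hfin'.mem_toFinset.1 hh)
      fun x hx => abs_apply_le_sSup_image (A := {x | |f x| = 1}ᶜ) (mt hfin'.mem_toFinset.2 hx)
    have hpos := lt_min (sub_pos.2 (sSup_abs_image_compl_lt_one hlim hf.le))
      (div_pos two_pos (Nat.cast_pos.2 hneT.card_pos))
    exact ⟨hle, by linarith⟩
  refine ⟨hfin, hne, fun _ => isOpen_singleton_of_abs_eq_one hlim, fun hfin' P hP => ?_,
    fun hΔ => ?_⟩
  · obtain rfl : P = (signedAverage f hfin'.toFinset).smulRight f :=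
      ContinuousLinearMap.ext fun g => by
        rw [hP, ContinuousLinearMap.smulRight_apply, signedAverage_apply]
    exact hbound hfin'
  · have hgap := sub_pos.2 (hbound hfin).2
    exact notMem_closure_convexHull_of_lt_two_sub_norm_id_sub_smulRight hf.le
      norm_signedAverage_le
      (signedAverage_self (hfin.toFinset_nonempty.2 hne) fun h hh => hfin.mem_toFinset.1 hh)
      (half_lt_self hgap) (hΔ _ (half_pos hgap))

/-- If `f ∈ C(K)` (`K` compact Hausdorff) has norm one and `|f(x)| < 1` at every
limit point `x` of `K`, then the set `H = {x : |f x| = 1}` is finite, nonempty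
and consists of isolated points; the norm-one rank-one projection
`P = μ ⊗ f` with `μ = (1/|H|) ∑_{h ∈ H} sign(f h)·δ_h` satisfies
`‖Id - P‖ ≤ 2 - min{δ, 2/|H|} < 2` where `δ = 1 - sup_{K∖H} |f|`; and `f` is
not a Δ-point. -/
theorem stmt_10 {K : Type*} [TopologicalSpace K] [CompactSpace K] [T2Space K] [Nonempty K]
    (f : C(K, ℝ)) (hf : ‖f‖ = 1)
    (hlim : ∀ x : K, (nhdsWithin x {x}ᶜ).NeBot → |f x| < 1) :
    Set.Finite {x : K | |f x| = 1} ∧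
    Set.Nonempty {x : K | |f x| = 1} ∧
    (∀ x ∈ {x : K | |f x| = 1}, IsOpen ({x} : Set K)) ∧
    (∀ hfin : Set.Finite {x : K | |f x| = 1},
      ∀ P : C(K, ℝ) →L[ℝ] C(K, ℝ),
        (∀ g : C(K, ℝ), P g =
          ((hfin.toFinset.card : ℝ)⁻¹ *
            ∑ h ∈ hfin.toFinset, Real.sign (f h) * g h) • f) →
        ‖ContinuousLinearMap.id ℝ (C(K, ℝ)) - P‖ ≤
          2 - min (1 - sSup ((fun x => |f x|) '' {x : K | |f x| = 1}ᶜ))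
                (2 / (hfin.toFinset.card : ℝ)) ∧
        ‖ContinuousLinearMap.id ℝ (C(K, ℝ)) - P‖ < 2) ∧
    ¬ (∀ ε > (0 : ℝ),
        f ∈ closure (convexHull ℝ {g : C(K, ℝ) | ‖g‖ ≤ 1 ∧ 2 - ε ≤ ‖f - g‖})) :=
  stmt_10_general f hf hlim
end

section
/- Let X and Y be real Banach spaces and N an absolute normalized norm on ℝ² with property (α). Then Z = X ⊕_N Y has no Daugavet points: for every (x,y) ∈ S_Z there exist ε > 0 and a point (w,0) or (0,w) in S_Z that is not in cl conv{(u,v) ∈ B_Z : ‖(x,y) − (u,v)‖_N ≥ 2 − ε}. -/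
/-!
Write `|u| = (‖(e u).1‖, ‖(e u).2‖)`, so that `‖u‖ = N |u|`. Since an absolute norm is
monotone on the positive quadrant, every `u ∈ B_Z` with `‖z - u‖ ≥ 2 - ε` satisfies
`N (|u| + |z|) ≥ 2 - ε`, and rescaling `|u|` to the unit sphere only makes this larger.
Property (α) at `|z|` therefore puts `|u|` below a point of `W`, so one coordinate norm, say
`‖(e u).1‖`, is at most some `s < 1` on the whole slice `Δ_ε(z)`. The set
`{u | ‖(e u).1‖ ≤ s}` is closed and convex, so it contains the closed convex hull of
`Δ_ε(z)`, but not the unit vectors `(x, 0)`.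
-/

def IsAbsolute (p : Seminorm ℝ (ℝ × ℝ)) : Prop :=
  ∀ s t : ℝ, p (s, t) = p (|s|, |t|)

namespace IsAbsolute

variable {p : Seminorm ℝ (ℝ × ℝ)}

theorem apply_le_apply (hp : IsAbsolute p) {a b a' b' : ℝ} (ha : |a| ≤ |a'|)
    (hb : |b| ≤ |b'|) :
    p (a, b) ≤ p (a', b') := by
  have hseg₁ : (|a|, |b|) ∈ segment ℝ (-|a'|, |b|) (|a'|, |b|) := by
    rw [← Prod.image_mk_segment_left, segment_eq_Icc (by linarith [abs_nonneg a'])]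
    exact ⟨|a|, ⟨by linarith [abs_nonneg a], ha⟩, rfl⟩
  have hseg₂ : (|a'|, |b|) ∈ segment ℝ (|a'|, -|b'|) (|a'|, |b'|) := by
    rw [← Prod.image_mk_segment_right, segment_eq_Icc (by linarith [abs_nonneg b'])]
    exact ⟨|b|, ⟨by linarith [abs_nonneg b], hb⟩, rfl⟩
  calc p (a, b) = p (|a|, |b|) := hp a b
    _ ≤ max (p (-|a'|, |b|)) (p (|a'|, |b|)) := p.convexOn.le_on_segment trivial trivial hseg₁
    _ = p (|a'|, |b|) := by rw [hp (-|a'|), abs_neg, abs_abs, abs_abs, max_self]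
    _ ≤ max (p (|a'|, -|b'|)) (p (|a'|, |b'|)) := p.convexOn.le_on_segment trivial trivial hseg₂
    _ = p (|a'|, |b'|) := by rw [hp _ (-|b'|), abs_neg, abs_abs, abs_abs, max_self]
    _ = p (a', b') := (hp a' b').symm

theorem abs_le_apply_fst (hp : IsAbsolute p) (h₁ : p (1, 0) = 1) (a b : ℝ) : |a| ≤ p (a, b) :=
  calc |a| = p (a • ((1 : ℝ), (0 : ℝ))) := by
        rw [map_smul_eq_mul, h₁, Real.norm_eq_abs, mul_one]
    _ ≤ p (a, b) := hp.apply_le_apply (by simp) (by simp)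

theorem abs_le_apply_snd (hp : IsAbsolute p) (h₂ : p (0, 1) = 1) (a b : ℝ) : |b| ≤ p (a, b) :=
  calc |b| = p (b • ((0 : ℝ), (1 : ℝ))) := by
        rw [map_smul_eq_mul, h₂, Real.norm_eq_abs, mul_one]
    _ ≤ p (a, b) := hp.apply_le_apply (by simp) (by simp)

/-- Property (α) at `(c, d)`, which speaks about the unit sphere, extends to the unit ball. -/
theorem exists_mem_ge_of_two_sub_le (hp : IsAbsolute p) (h₁ : p (1, 0) = 1) (h₂ : p (0, 1) = 1)
    {W : Set (ℝ × ℝ)} {ε c d a b : ℝ} (hc : 0 ≤ c) (hd : 0 ≤ d) (hcdW : (c, d) ∈ W)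
    (hW : ∀ a b : ℝ, 0 ≤ a → 0 ≤ b → p (a, b) = 1 →
      2 - ε ≤ p ((a, b) + (c, d)) → (a, b) ∈ W)
    (ha : 0 ≤ a) (hb : 0 ≤ b) (hab : p (a, b) ≤ 1) (hε : 2 - ε ≤ p ((a, b) + (c, d))) :
    ∃ q ∈ W, a ≤ q.1 ∧ b ≤ q.2 := by
  rcases (apply_nonneg p (a, b)).eq_or_lt with h0 | hpos
  · have ha0 : a = 0 := abs_nonpos_iff.mp (h0 ▸ hp.abs_le_apply_fst h₁ a b)
    have hb0 : b = 0 := abs_nonpos_iff.mp (h0 ▸ hp.abs_le_apply_snd h₂ a b)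
    exact ⟨(c, d), hcdW, ha0 ▸ hc, hb0 ▸ hd⟩
  set r := (p (a, b))⁻¹
  have hr : 1 ≤ r := one_le_inv₀ hpos |>.mpr hab
  have hra : a ≤ r * a := le_mul_of_one_le_left ha hr
  have hrb : b ≤ r * b := le_mul_of_one_le_left hb hr
  refine ⟨(r * a, r * b), hW _ _ (ha.trans hra) (hb.trans hrb) ?_ ?_, hra, hrb⟩
  · rw [← smul_eq_mul, ← smul_eq_mul, ← Prod.smul_mk, map_smul_eq_mul, Real.norm_eq_abs,
      abs_of_pos (inv_pos.mpr hpos), inv_mul_cancel₀ hpos.ne']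
  · refine hε.trans (hp.apply_le_apply ?_ ?_) <;>
      exact abs_le_abs_of_nonneg (by positivity) (by linarith)

end IsAbsolute

theorem notMem_closure_convexHull_of_norm_apply_le {Z E : Type*}
    [NormedAddCommGroup Z] [NormedSpace ℝ Z] [NormedAddCommGroup E] [NormedSpace ℝ E]
    (T : Z →ₗ[ℝ] E) (hT : Continuous T) {A : Set Z} {s : ℝ} (hA : ∀ u ∈ A, ‖T u‖ ≤ s)
    {v : Z} (hv : s < ‖T v‖) : v ∉ closure (convexHull ℝ A) := by
  have hsub : closure (convexHull ℝ A) ⊆ T ⁻¹' Metric.closedBall 0 s :=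
    closure_minimal
      (convexHull_min (fun u hu => mem_closedBall_zero_iff.mpr (hA u hu))
        ((convex_closedBall 0 s).linear_preimage T))
      (Metric.isClosed_closedBall.preimage hT)
  exact fun hvA => hv.not_ge (mem_closedBall_zero_iff.mp (hsub hvA))

section DirectSum

variable {X Y Z : Type*} [NormedAddCommGroup X] [NormedSpace ℝ X] [NormedAddCommGroup Y]
  [NormedSpace ℝ Y] [NormedAddCommGroup Z] [NormedSpace ℝ Z] {p : Seminorm ℝ (ℝ × ℝ)}
  {e : Z ≃ₗ[ℝ] X × Y}

theorem continuous_fst_linearEquiv (hp : IsAbsolute p) (h₁ : p (1, 0) = 1)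
    (he : ∀ z : Z, ‖z‖ = p (‖(e z).1‖, ‖(e z).2‖)) :
    Continuous (LinearMap.fst ℝ X Y ∘ₗ e.toLinearMap) :=
  AddMonoidHomClass.continuous_of_bound _ 1 fun u => by
    simpa [← he u] using hp.abs_le_apply_fst h₁ ‖(e u).1‖ ‖(e u).2‖

theorem continuous_snd_linearEquiv (hp : IsAbsolute p) (h₂ : p (0, 1) = 1)
    (he : ∀ z : Z, ‖z‖ = p (‖(e z).1‖, ‖(e z).2‖)) :
    Continuous (LinearMap.snd ℝ X Y ∘ₗ e.toLinearMap) :=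
  AddMonoidHomClass.continuous_of_bound _ 1 fun u => by
    simpa [← he u] using hp.abs_le_apply_snd h₂ ‖(e u).1‖ ‖(e u).2‖

theorem norm_sub_le_apply_add (hp : IsAbsolute p)
    (he : ∀ z : Z, ‖z‖ = p (‖(e z).1‖, ‖(e z).2‖)) (z u : Z) :
    ‖z - u‖ ≤ p ((‖(e u).1‖, ‖(e u).2‖) + (‖(e z).1‖, ‖(e z).2‖)) := by
  rw [he, Prod.mk_add_mk, map_sub]
  refine hp.apply_le_apply ?_ ?_ <;>
    exact abs_le_abs_of_nonneg (norm_nonneg _) ((norm_sub_le _ _).trans_eq (add_comm _ _))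

end DirectSum

theorem stmt_14_general {X Y Z : Type*}
    [NormedAddCommGroup X] [NormedSpace ℝ X] [Nontrivial X]
    [NormedAddCommGroup Y] [NormedSpace ℝ Y] [Nontrivial Y]
    [NormedAddCommGroup Z] [NormedSpace ℝ Z]
    (N : ℝ × ℝ → ℝ)
    -- `N` is a norm on `ℝ²`:
    (Ntri : ∀ u v : ℝ × ℝ, N (u + v) ≤ N u + N v)
    (Nhom : ∀ (t : ℝ) (u : ℝ × ℝ), N (t • u) = |t| * N u)
    -- `N` is absolute and normalized:
    (Nabs : ∀ s t : ℝ, N (s, t) = N (|s|, |t|))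
    (Nnorm₁ : N (1, 0) = 1) (Nnorm₂ : N (0, 1) = 1)
    -- `N` has property (α):
    (Nalpha : ∀ c d : ℝ, 0 ≤ c → 0 ≤ d → N (c, d) = 1 →
      ∃ ε > (0 : ℝ), ∃ W : Set (ℝ × ℝ), W ∈ nhds (c, d) ∧
        (∀ a b : ℝ, 0 ≤ a → 0 ≤ b → N (a, b) = 1 →
          2 - ε ≤ N ((a, b) + (c, d)) → (a, b) ∈ W) ∧
        ((∃ s < (1 : ℝ), ∀ p ∈ W, p.1 ≤ s) ∨ (∃ s < (1 : ℝ), ∀ p ∈ W, p.2 ≤ s)))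
    -- `Z = X ⊕_N Y`:
    (e : Z ≃ₗ[ℝ] X × Y)
    (he : ∀ z : Z, ‖z‖ = N (‖(e z).1‖, ‖(e z).2‖)) :
    ∀ z : Z, ‖z‖ = 1 →
      ∃ ε > (0 : ℝ), ∃ v : Z, ‖v‖ = 1 ∧ ((e v).2 = 0 ∨ (e v).1 = 0) ∧
        v ∉ closure (convexHull ℝ {w : Z | ‖w‖ ≤ 1 ∧ 2 - ε ≤ ‖z - w‖}) := by
  let p : Seminorm ℝ (ℝ × ℝ) := .of N Ntri fun t u => by rw [Nhom, Real.norm_eq_abs]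
  have hp : IsAbsolute p := Nabs
  intro z hz
  obtain ⟨ε, hε, W, hW, hWsphere, hWs⟩ :=
    Nalpha _ _ (norm_nonneg _) (norm_nonneg _) ((he z).symm.trans hz)
  have hΔ : ∀ u ∈ {w : Z | ‖w‖ ≤ 1 ∧ 2 - ε ≤ ‖z - w‖},
      ∃ q ∈ W, ‖(e u).1‖ ≤ q.1 ∧ ‖(e u).2‖ ≤ q.2 :=
    fun u ⟨hu, hzu⟩ => hp.exists_mem_ge_of_two_sub_le Nnorm₁ Nnorm₂ (norm_nonneg _)
      (norm_nonneg _) (mem_of_mem_nhds hW) hWsphere (norm_nonneg _) (norm_nonneg _)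
      ((he u).symm.trans_le hu) (hzu.trans (norm_sub_le_apply_add hp he z u))
  refine ⟨ε, hε, ?_⟩
  rcases hWs with ⟨s, hs, hsW⟩ | ⟨s, hs, hsW⟩
  · obtain ⟨x, hx⟩ := exists_norm_eq X zero_le_one
    refine ⟨e.symm (x, 0), by simp [he, hx, Nnorm₁], .inl (by simp), ?_⟩
    refine notMem_closure_convexHull_of_norm_apply_le _ (continuous_fst_linearEquiv hp Nnorm₁ he)
      (fun u hu => ?_) (by simpa [hx] using hs)
    obtain ⟨q, hq, hq₁, -⟩ := hΔ u hu
    exact hq₁.trans (hsW q hq)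
  · obtain ⟨y, hy⟩ := exists_norm_eq Y zero_le_one
    refine ⟨e.symm (0, y), by simp [he, hy, Nnorm₂], .inr (by simp), ?_⟩
    refine notMem_closure_convexHull_of_norm_apply_le _ (continuous_snd_linearEquiv hp Nnorm₂ he)
      (fun u hu => ?_) (by simpa [hy] using hs)
    obtain ⟨q, hq, -, hq₂⟩ := hΔ u hu
    exact hq₂.trans (hsW q hq)

/-- If `N` is an absolute normalized norm on `ℝ²` with property (α), then
`Z = X ⊕_N Y` has no Daugavet points: for every `z ∈ S_Z` there are `ε > 0`
and a point of `S_Z` of the form `(w, 0)` or `(0, w)` that is not in the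
closed convex hull of `Δ_ε(z)`. -/
theorem stmt_14 {X Y Z : Type*}
    [NormedAddCommGroup X] [NormedSpace ℝ X] [Nontrivial X]
    [NormedAddCommGroup Y] [NormedSpace ℝ Y] [Nontrivial Y]
    [NormedAddCommGroup Z] [NormedSpace ℝ Z]
    (N : ℝ × ℝ → ℝ)
    -- `N` is a norm on `ℝ²`:
    (Ntri : ∀ u v : ℝ × ℝ, N (u + v) ≤ N u + N v)
    (Nhom : ∀ (t : ℝ) (u : ℝ × ℝ), N (t • u) = |t| * N u)
    (Ndef : ∀ u : ℝ × ℝ, N u = 0 → u = 0)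
    -- `N` is absolute and normalized:
    (Nabs : ∀ s t : ℝ, N (s, t) = N (|s|, |t|))
    (Nnorm₁ : N (1, 0) = 1) (Nnorm₂ : N (0, 1) = 1)
    -- `N` has property (α):
    (Nalpha : ∀ c d : ℝ, 0 ≤ c → 0 ≤ d → N (c, d) = 1 →
      ∃ ε > (0 : ℝ), ∃ W : Set (ℝ × ℝ), W ∈ nhds (c, d) ∧
        (∀ a b : ℝ, 0 ≤ a → 0 ≤ b → N (a, b) = 1 →
          2 - ε ≤ N ((a, b) + (c, d)) → (a, b) ∈ W) ∧
        ((∃ s < (1 : ℝ), ∀ p ∈ W, p.1 ≤ s) ∨ (∃ s < (1 : ℝ), ∀ p ∈ W, p.2 ≤ s)))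
    -- `Z = X ⊕_N Y`:
    (e : Z ≃ₗ[ℝ] X × Y)
    (he : ∀ z : Z, ‖z‖ = N (‖(e z).1‖, ‖(e z).2‖)) :
    ∀ z : Z, ‖z‖ = 1 →
      ∃ ε > (0 : ℝ), ∃ v : Z, ‖v‖ = 1 ∧ ((e v).2 = 0 ∨ (e v).1 = 0) ∧
        v ∉ closure (convexHull ℝ {w : Z | ‖w‖ ≤ 1 ∧ 2 - ε ≤ ‖z - w‖}) :=
  stmt_14_general N Ntri Nhom Nabs Nnorm₁ Nnorm₂ Nalpha e he
end

section
/- Every strictly convex absolute normalized norm N on ℝ² has property (α): for every c, d ≥ 0 with N(c,d) = 1 there exist ε > 0 and a neighbourhood W of (c,d) such that any a, b ≥ 0 with N(a,b) = 1 and N((a,b)+(c,d)) ≥ 2 − ε lies in W, and either sup_{(a,b)∈W} a < 1 or sup_{(a,b)∈W} b < 1. -/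
/-!
One of the coordinates of a point `x` of the unit sphere is `< 1`: otherwise `x = (1, 1)`, and
strict convexity between `(1, 0)` and `(1, 1)` would give `N (1, 1/2) < 1 ≤ N (1, 1/2)`.
Say `π x < 1` for that coordinate `π`, and let `W = {π < s}` with `π x < s < 1`. The part of
the unit sphere outside `W` is compact and does not contain `x`, so by strict convexity the
continuous function `y ↦ N (y + x)` stays below `2` on it, hence below `2 - ε` for some `ε > 0`.
-/

open Topology

lemma IsCompact.exists_forall_le_sub_of_forall_lt {α : Type*} [TopologicalSpace α]
    {K : Set α} {f : α → ℝ} {C : ℝ} (hK : IsCompact K) (hf : ContinuousOn f K)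
    (hlt : ∀ x ∈ K, f x < C) : ∃ ε > 0, ∀ x ∈ K, f x ≤ C - ε := by
  rcases K.eq_empty_or_nonempty with rfl | hne
  · exact ⟨1, one_pos, by simp⟩
  obtain ⟨x₀, hx₀, hmax⟩ := hK.exists_isMaxOn hne hf
  exact ⟨C - f x₀, sub_pos.2 (hlt x₀ hx₀), fun x hx => by linarith [show f x ≤ f x₀ from hmax hx]⟩

section StrictConvexity

variable {E : Type*} [AddCommGroup E] [Module ℝ E] {N : E → ℝ}

lemma add_lt_two_of_strictConvex (Nhom : ∀ (t : ℝ) (u : E), N (t • u) = |t| * N u)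
    (Nsc : ∀ u v : E, N u = 1 → N v = 1 → u ≠ v → N ((1 / 2 : ℝ) • (u + v)) < 1)
    {u v : E} (hu : N u = 1) (hv : N v = 1) (huv : u ≠ v) : N (u + v) < 2 := by
  have := Nsc u v hu hv huv
  rw [Nhom, abs_of_pos (by norm_num)] at this
  linarith

theorem exists_nhds_of_strictConvex [TopologicalSpace E] [ContinuousAdd E]
    (hN : Continuous N) (hsphere : IsCompact {x | N x = 1})
    (Nhom : ∀ (t : ℝ) (u : E), N (t • u) = |t| * N u)
    (Nsc : ∀ u v : E, N u = 1 → N v = 1 → u ≠ v → N ((1 / 2 : ℝ) • (u + v)) < 1)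
    {π : E → ℝ} (hπ : Continuous π) {x : E} (hx : N x = 1) (hπx : π x < 1) :
    ∃ ε > (0 : ℝ), ∃ W ∈ 𝓝 x, (∀ y, N y = 1 → 2 - ε ≤ N (y + x) → y ∈ W) ∧
      ∃ s < (1 : ℝ), ∀ p ∈ W, π p ≤ s := by
  obtain ⟨s, hxs, hs1⟩ := exists_between hπx
  have hK : IsCompact ({y | N y = 1} ∩ {y | s ≤ π y}) :=
    hsphere.inter_right (isClosed_le continuous_const hπ)
  have hlt : ∀ y ∈ {y | N y = 1} ∩ {y | s ≤ π y}, N (y + x) < 2 := by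
    rintro y ⟨hy, hsy : s ≤ π y⟩
    exact add_lt_two_of_strictConvex Nhom Nsc hy hx (by rintro rfl; linarith)
  obtain ⟨ε, hε, hle⟩ := hK.exists_forall_le_sub_of_forall_lt (f := fun y => N (y + x))
    (hN.comp (continuous_add_const x)).continuousOn hlt
  refine ⟨ε / 2, half_pos hε, {y | π y < s}, (isOpen_lt hπ continuous_const).mem_nhds hxs,
    fun y hy hyx => ?_, s, hs1, fun p hp => le_of_lt hp⟩
  by_contra hys
  linarith [hle y ⟨hy, (not_lt.1 hys : s ≤ π y)⟩]

end StrictConvexity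

section AbsoluteNorm

variable {N : ℝ × ℝ → ℝ}

lemma norm_le_of_absolute (Ntri : ∀ u v : ℝ × ℝ, N (u + v) ≤ N u + N v)
    (Nhom : ∀ (t : ℝ) (u : ℝ × ℝ), N (t • u) = |t| * N u)
    (Nabs : ∀ s t : ℝ, N (s, t) = N (|s|, |t|))
    (Nnorm₁ : N (1, 0) = 1) (Nnorm₂ : N (0, 1) = 1) (p : ℝ × ℝ) : ‖p‖ ≤ N p := by
  obtain ⟨a, b⟩ := p
  have hhalf : ∀ u v : ℝ × ℝ, N ((1 / 2 : ℝ) • (u + v)) ≤ (N u + N v) / 2 := fun u v => by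
    rw [Nhom, abs_of_pos (by norm_num)]
    linarith [Ntri u v]
  have ha : |a| ≤ N (a, b) := by
    have hflip : N (a, -b) = N (a, b) := by rw [Nabs, abs_neg, ← Nabs]
    have := hhalf (a, b) (a, -b)
    rw [show (1 / 2 : ℝ) • ((a, b) + (a, -b)) = a • ((1 : ℝ), (0 : ℝ)) by
      ext <;> simp; ring, Nhom, Nnorm₁, hflip] at this
    linarith
  have hb : |b| ≤ N (a, b) := by
    have hflip : N (-a, b) = N (a, b) := by rw [Nabs, abs_neg, ← Nabs]
    have := hhalf (a, b) (-a, b)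
    rw [show (1 / 2 : ℝ) • ((a, b) + (-a, b)) = b • ((0 : ℝ), (1 : ℝ)) by
      ext <;> simp; ring, Nhom, Nnorm₂, hflip] at this
    linarith
  exact max_le ha hb

lemma le_two_mul_norm_of_normalized (Ntri : ∀ u v : ℝ × ℝ, N (u + v) ≤ N u + N v)
    (Nhom : ∀ (t : ℝ) (u : ℝ × ℝ), N (t • u) = |t| * N u)
    (Nnorm₁ : N (1, 0) = 1) (Nnorm₂ : N (0, 1) = 1) (p : ℝ × ℝ) : N p ≤ 2 * ‖p‖ := by
  have hsplit : p = p.1 • ((1 : ℝ), (0 : ℝ)) + p.2 • ((0 : ℝ), (1 : ℝ)) := by ext <;> simp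
  have := Ntri (p.1 • ((1 : ℝ), (0 : ℝ))) (p.2 • ((0 : ℝ), (1 : ℝ)))
  rw [← hsplit, Nhom, Nhom, Nnorm₁, Nnorm₂] at this
  linarith [norm_fst_le p, norm_snd_le p, Real.norm_eq_abs p.1, Real.norm_eq_abs p.2]

lemma continuous_of_normalized (Ntri : ∀ u v : ℝ × ℝ, N (u + v) ≤ N u + N v)
    (Nhom : ∀ (t : ℝ) (u : ℝ × ℝ), N (t • u) = |t| * N u)
    (Nnorm₁ : N (1, 0) = 1) (Nnorm₂ : N (0, 1) = 1) : Continuous N := by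
  refine (LipschitzWith.of_le_add_mul 2 fun x y => ?_).continuous
  have := Ntri y (x - y)
  rw [add_sub_cancel] at this
  rw [dist_eq_norm]
  push_cast
  linarith [le_two_mul_norm_of_normalized Ntri Nhom Nnorm₁ Nnorm₂ (x - y)]

lemma isCompact_sphere_of_absolute (Ntri : ∀ u v : ℝ × ℝ, N (u + v) ≤ N u + N v)
    (Nhom : ∀ (t : ℝ) (u : ℝ × ℝ), N (t • u) = |t| * N u)
    (Nabs : ∀ s t : ℝ, N (s, t) = N (|s|, |t|))
    (Nnorm₁ : N (1, 0) = 1) (Nnorm₂ : N (0, 1) = 1) : IsCompact {x | N x = 1} := by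
  refine Metric.isCompact_of_isClosed_isBounded
    (isClosed_eq (continuous_of_normalized Ntri Nhom Nnorm₁ Nnorm₂) continuous_const)
    (Metric.isBounded_closedBall (x := 0) (r := 1) |>.subset fun p hp => ?_)
  rw [mem_closedBall_zero_iff, ← show N p = 1 from hp]
  exact norm_le_of_absolute Ntri Nhom Nabs Nnorm₁ Nnorm₂ p

lemma fst_lt_one_or_snd_lt_one (Ntri : ∀ u v : ℝ × ℝ, N (u + v) ≤ N u + N v)
    (Nhom : ∀ (t : ℝ) (u : ℝ × ℝ), N (t • u) = |t| * N u)
    (Nabs : ∀ s t : ℝ, N (s, t) = N (|s|, |t|))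
    (Nnorm₁ : N (1, 0) = 1) (Nnorm₂ : N (0, 1) = 1)
    (Nsc : ∀ u v : ℝ × ℝ, N u = 1 → N v = 1 → u ≠ v → N ((1 / 2 : ℝ) • (u + v)) < 1)
    {c d : ℝ} (hcd : N (c, d) = 1) : c < 1 ∨ d < 1 := by
  have hnorm := norm_le_of_absolute Ntri Nhom Nabs Nnorm₁ Nnorm₂
  by_contra! h
  have hcd_le : ‖(c, d)‖ ≤ 1 := hcd ▸ hnorm (c, d)
  rw [Prod.norm_def, max_le_iff, Real.norm_eq_abs, Real.norm_eq_abs] at hcd_le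
  obtain rfl : c = 1 := le_antisymm (le_of_abs_le hcd_le.1) h.1
  obtain rfl : d = 1 := le_antisymm (le_of_abs_le hcd_le.2) h.2
  have hmid := Nsc (1, 0) (1, 1) Nnorm₁ hcd (by simp)
  have hone : (1 : ℝ) ≤ ‖(1 / 2 : ℝ) • (((1 : ℝ), (0 : ℝ)) + (1, 1))‖ :=
    le_trans (by norm_num) (norm_fst_le _)
  linarith [hnorm ((1 / 2 : ℝ) • (((1 : ℝ), (0 : ℝ)) + (1, 1)))]

end AbsoluteNorm

theorem stmt_15_general (N : ℝ × ℝ → ℝ)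
    -- `N` is a norm on `ℝ²`:
    (Ntri : ∀ u v : ℝ × ℝ, N (u + v) ≤ N u + N v)
    (Nhom : ∀ (t : ℝ) (u : ℝ × ℝ), N (t • u) = |t| * N u)
    -- `N` is absolute and normalized:
    (Nabs : ∀ s t : ℝ, N (s, t) = N (|s|, |t|))
    (Nnorm₁ : N (1, 0) = 1) (Nnorm₂ : N (0, 1) = 1)
    -- `N` is strictly convex:
    (Nsc : ∀ u v : ℝ × ℝ, N u = 1 → N v = 1 → u ≠ v → N ((1 / 2 : ℝ) • (u + v)) < 1) :
    ∀ c d : ℝ, 0 ≤ c → 0 ≤ d → N (c, d) = 1 →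
      ∃ ε > (0 : ℝ), ∃ W : Set (ℝ × ℝ), W ∈ nhds (c, d) ∧
        (∀ a b : ℝ, 0 ≤ a → 0 ≤ b → N (a, b) = 1 →
          2 - ε ≤ N ((a, b) + (c, d)) → (a, b) ∈ W) ∧
        ((∃ s < (1 : ℝ), ∀ p ∈ W, p.1 ≤ s) ∨ (∃ s < (1 : ℝ), ∀ p ∈ W, p.2 ≤ s)) := by
  intro c d _ _ hcd
  have hN := continuous_of_normalized Ntri Nhom Nnorm₁ Nnorm₂
  have hsphere := isCompact_sphere_of_absolute Ntri Nhom Nabs Nnorm₁ Nnorm₂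
  rcases fst_lt_one_or_snd_lt_one Ntri Nhom Nabs Nnorm₁ Nnorm₂ Nsc hcd with hc | hd
  · obtain ⟨ε, hε, W, hW, hsum, hπ⟩ :=
      exists_nhds_of_strictConvex hN hsphere Nhom Nsc continuous_fst hcd hc
    exact ⟨ε, hε, W, hW, fun a b _ _ hab => hsum (a, b) hab, Or.inl hπ⟩
  · obtain ⟨ε, hε, W, hW, hsum, hπ⟩ :=
      exists_nhds_of_strictConvex hN hsphere Nhom Nsc continuous_snd hcd hd
    exact ⟨ε, hε, W, hW, fun a b _ _ hab => hsum (a, b) hab, Or.inr hπ⟩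

/-- Every strictly convex absolute normalized norm `N` on `ℝ²` has property
(α): for all `c, d ≥ 0` with `N(c, d) = 1` there are `ε > 0` and a
neighbourhood `W` of `(c, d)` such that every `(a, b)` with `a, b ≥ 0`,
`N(a, b) = 1` and `N((a, b) + (c, d)) ≥ 2 - ε` lies in `W`, and either the
first or the second coordinate of points of `W` is bounded away from `1`. -/
theorem stmt_15 (N : ℝ × ℝ → ℝ)
    -- `N` is a norm on `ℝ²`:
    (Ntri : ∀ u v : ℝ × ℝ, N (u + v) ≤ N u + N v)
    (Nhom : ∀ (t : ℝ) (u : ℝ × ℝ), N (t • u) = |t| * N u)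
    (Ndef : ∀ u : ℝ × ℝ, N u = 0 → u = 0)
    -- `N` is absolute and normalized:
    (Nabs : ∀ s t : ℝ, N (s, t) = N (|s|, |t|))
    (Nnorm₁ : N (1, 0) = 1) (Nnorm₂ : N (0, 1) = 1)
    -- `N` is strictly convex:
    (Nsc : ∀ u v : ℝ × ℝ, N u = 1 → N v = 1 → u ≠ v → N ((1 / 2 : ℝ) • (u + v)) < 1) :
    ∀ c d : ℝ, 0 ≤ c → 0 ≤ d → N (c, d) = 1 →
      ∃ ε > (0 : ℝ), ∃ W : Set (ℝ × ℝ), W ∈ nhds (c, d) ∧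
        (∀ a b : ℝ, 0 ≤ a → 0 ≤ b → N (a, b) = 1 →
          2 - ε ≤ N ((a, b) + (c, d)) → (a, b) ∈ W) ∧
        ((∃ s < (1 : ℝ), ∀ p ∈ W, p.1 ≤ s) ∨ (∃ s < (1 : ℝ), ∀ p ∈ W, p.2 ≤ s)) :=
  stmt_15_general N Ntri Nhom Nabs Nnorm₁ Nnorm₂ Nsc
end
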